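/- arXiv:2311.11324 — 7 statements merged into one kernel-verified Lean document; each statement's English description precedes it below -/
import Mathlib

section
/- The total number of descents over all m-tensor words over [k] equals (1/2)·(d·∏_{ℓ∈[d]} m_ℓ − ∑_{i∈[d]} ∏_{ℓ∈[d], ℓ≠i} m_ℓ)·(k−1)·k^{(∏_{ℓ∈[d]} m_ℓ)−1}. That is, ∑_{w∈T(m,k)} des(w) = (1/2)(d·m_1⋯m_d − ∑_{i=1}^{d} ∏_{ℓ≠i} m_ℓ)(k−1)k^{m_1⋯m_d−1}. -/
open Finset

lemma card_eq_coord {α : Type*} [Fintype α] [DecidableEq α] (k : ℕ) (p1 p2 : α) (h : p1 ≠ p2) :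
    (Finset.univ.filter fun w : α → Fin k => w p1 = w p2).card = k ^ (Fintype.card α - 1) := by
  rw [← Fintype.card_subtype]
  have e : {w : α → Fin k // w p1 = w p2} ≃ ({x : α // x ≠ p2} → Fin k) :=
  { toFun := fun w x => w.1 x.1
    invFun := fun g => ⟨fun x => if hx : x = p2 then g ⟨p1, h⟩ else g ⟨x, hx⟩, by simp [h]⟩
    left_inv := fun w => by
      apply Subtype.ext; funext x
      by_cases hx : x = p2
      · subst hx; simp [← w.2]
      · simp [hx]
    right_inv := fun g => by
      funext x
      have := x.2
      simp [this] }
  rw [Fintype.card_congr e, Fintype.card_fun, Fintype.card_fin]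
  congr 1
  simp [Fintype.card_subtype_compl]

lemma card_lt_symm {α : Type*} [Fintype α] [DecidableEq α] (k : ℕ) (p1 p2 : α) :
    (Finset.univ.filter fun w : α → Fin k => w p2 < w p1).card =
      (Finset.univ.filter fun w : α → Fin k => w p1 < w p2).card := by
  apply Finset.card_bij' (fun w _ => w ∘ Equiv.swap p1 p2) (fun w _ => w ∘ Equiv.swap p1 p2)
  · intro w hw
    simp only [Finset.mem_filter, Finset.mem_univ, true_and] at hw ⊢
    simpa [Equiv.swap_apply_left, Equiv.swap_apply_right] using hw
  · intro w hw
    simp only [Finset.mem_filter, Finset.mem_univ, true_and] at hw ⊢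
    simpa [Equiv.swap_apply_left, Equiv.swap_apply_right] using hw
  · intro w _; funext x; simp
  · intro w _; funext x; simp

lemma two_mul_card_lt {α : Type*} [Fintype α] [DecidableEq α] (k : ℕ) (p1 p2 : α) (h : p1 ≠ p2) :
    2 * (Finset.univ.filter fun w : α → Fin k => w p2 < w p1).card =
      k ^ Fintype.card α - k ^ (Fintype.card α - 1) := by
  have h1 : (univ.filter fun w : α → Fin k => w p2 < w p1).card
      + (univ.filter fun w : α → Fin k => ¬ w p2 < w p1).card
      = k ^ Fintype.card α := by
    rw [Finset.card_filter_add_card_filter_not]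
    simp
  have h2 : (Finset.univ.filter fun w : α → Fin k => ¬ w p2 < w p1) =
      (Finset.univ.filter fun w : α → Fin k => w p1 < w p2) ∪
        (Finset.univ.filter fun w : α → Fin k => w p1 = w p2) := by
    rw [← Finset.filter_or]
    apply Finset.filter_congr
    intro w _
    simp [not_lt, le_iff_lt_or_eq]
  have hdisj : Disjoint (Finset.univ.filter fun w : α → Fin k => w p1 < w p2)
      (Finset.univ.filter fun w : α → Fin k => w p1 = w p2) := by
    rw [Finset.disjoint_left]
    intro w hw hw'
    simp only [Finset.mem_filter] at hw hw'
    exact absurd hw'.2 hw.2.ne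
  have e2 := congrArg Finset.card h2
  rw [Finset.card_union_of_disjoint hdisj] at e2
  have e3 := card_lt_symm k p1 p2
  have e4 := card_eq_coord k p1 p2 h
  have key : 2 * (univ.filter fun w : α → Fin k => w p2 < w p1).card
      + k ^ (Fintype.card α - 1) = k ^ Fintype.card α := by
    linarith [h1, e2, e3, e4]
  exact Nat.eq_sub_of_add_eq key
open Finset

lemma sum_ite_unique {ι : Type*} [Fintype ι] (P : ι → Prop) [DecidablePred P]
    [Decidable (∃ i, P i)] (c : ℕ) (h : ∀ i j, P i → P j → i = j) :
    (if ∃ i, P i then c else 0) = ∑ i, if P i then c else 0 := by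
  by_cases hex : ∃ i, P i
  · obtain ⟨i0, hi0⟩ := hex
    rw [if_pos ⟨i0, hi0⟩, Finset.sum_eq_single i0 ?_ ?_]
    · rw [if_pos hi0]
    · intro j _ hj
      rw [if_neg]
      intro hPj
      exact hj (h j i0 hPj hi0)
    · intro habs; exact absurd (Finset.mem_univ i0) habs
  · rw [if_neg hex]
    symm
    apply Finset.sum_eq_zero
    intro i _
    rw [if_neg]
    intro hPi
    exact hex ⟨i, hPi⟩

lemma fin_count_lt (n : ℕ) :
    (∑ x : Fin n, if (x : ℕ) + 1 < n then 1 else 0) = n - 1 := by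
  rw [Fin.sum_univ_eq_sum_range (fun i => if i + 1 < n then 1 else 0)]
  rw [← Finset.card_filter]
  have : (Finset.range n).filter (fun i => i + 1 < n) = Finset.range (n - 1) := by
    ext i
    simp only [Finset.mem_filter, Finset.mem_range]
    omega
  rw [this, Finset.card_range]

lemma countA {d : ℕ} (m : Fin d → ℕ) (ℓ : Fin d) :
    (∑ p : ((∀ r, Fin (m r)) × (∀ r, Fin (m r))),
        if ((p.2 ℓ : ℕ) = (p.1 ℓ : ℕ) + 1 ∧ ∀ r, r ≠ ℓ → p.2 r = p.1 r) then 1 else 0)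
      = (m ℓ - 1) * ∏ r ∈ Finset.univ.erase ℓ, m r := by
  classical
  rw [Fintype.sum_prod_type]
  have h1 : ∀ p1 : (∀ r, Fin (m r)),
      (∑ p2 : (∀ r, Fin (m r)),
          if ((p2 ℓ : ℕ) = (p1 ℓ : ℕ) + 1 ∧ ∀ r, r ≠ ℓ → p2 r = p1 r) then 1 else 0)
        = if (p1 ℓ : ℕ) + 1 < m ℓ then 1 else 0 := by
    intro p1
    by_cases hlt : (p1 ℓ : ℕ) + 1 < m ℓ
    · rw [if_pos hlt, Finset.sum_eq_single (Function.update p1 ℓ ⟨(p1 ℓ : ℕ) + 1, hlt⟩)]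
      · rw [if_pos]
        constructor
        · simp
        · intro r hr
          simp [Function.update_of_ne hr]
      · intro p2 _ hne
        rw [if_neg]
        rintro ⟨ha, hb⟩
        apply hne
        funext r
        by_cases hr : r = ℓ
        · subst hr
          rw [Function.update_self]
          exact Fin.ext ha
        · rw [Function.update_of_ne hr]
          exact hb r hr
      · intro habs; exact absurd (Finset.mem_univ _) habs
    · rw [if_neg hlt]
      apply Finset.sum_eq_zero
      intro p2 _
      rw [if_neg]
      rintro ⟨ha, -⟩
      exact hlt (ha ▸ (p2 ℓ).isLt)
  rw [Finset.sum_congr rfl fun p1 _ => h1 p1]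
  have h2 : ∀ p1 : (∀ r, Fin (m r)),
      (if (p1 ℓ : ℕ) + 1 < m ℓ then 1 else 0)
        = ∏ r, (fun r (x : Fin (m r)) =>
            if r = ℓ then (if (x : ℕ) + 1 < m r then 1 else 0) else 1) r (p1 r) := by
    intro p1
    rw [Finset.prod_eq_single ℓ]
    · simp
    · intro r _ hr; simp [hr]
    · intro habs; exact absurd (Finset.mem_univ ℓ) habs
  rw [Finset.sum_congr rfl fun p1 _ => h2 p1]
  rw [← Fintype.piFinset_univ,
    ← Finset.prod_univ_sum (fun _ : Fin d => (Finset.univ : Finset (Fin (m _))))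
      (fun r (x : Fin (m r)) => if r = ℓ then (if (x : ℕ) + 1 < m r then 1 else 0) else 1)]
  rw [← Finset.mul_prod_erase Finset.univ _ (Finset.mem_univ ℓ)]
  congr 1
  · simp only [if_pos rfl]
    exact fin_count_lt (m ℓ)
  · apply Finset.prod_congr rfl
    intro r hr
    have hrl : r ≠ ℓ := (Finset.mem_erase.mp hr).1
    simp [hrl]

/-- The number of descents of an `m`-tensor word `w` over `[k]`: pairs `(i, j)` of indices
with `w i > w j` and `j = i + e ℓ` for some `ℓ`. -/
def tensorDes {k d : ℕ} {m : Fin d → ℕ} (w : (∀ ℓ, Fin (m ℓ)) → Fin k) : ℕ :=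
  (Finset.univ.filter fun p : (∀ ℓ, Fin (m ℓ)) × (∀ ℓ, Fin (m ℓ)) =>
      w p.2 < w p.1 ∧
        ∃ ℓ, ((p.2 ℓ : ℕ) = (p.1 ℓ : ℕ) + 1 ∧ ∀ r, r ≠ ℓ → p.2 r = p.1 r)).card

lemma key_count (k d : ℕ) (m : Fin d → ℕ) :
    2 * ∑ w : (∀ ℓ, Fin (m ℓ)) → Fin k, tensorDes w =
      (∑ ℓ, (m ℓ - 1) * ∏ r ∈ Finset.univ.erase ℓ, m r) *
        (k ^ (∏ ℓ, m ℓ) - k ^ ((∏ ℓ, m ℓ) - 1)) := by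
  classical
  have hcard : Fintype.card (∀ ℓ, Fin (m ℓ)) = ∏ ℓ, m ℓ := by simp
  have huniq : ∀ (p : (∀ ℓ, Fin (m ℓ)) × (∀ ℓ, Fin (m ℓ))) (ℓ ℓ' : Fin d),
      ((p.2 ℓ : ℕ) = (p.1 ℓ : ℕ) + 1 ∧ ∀ r, r ≠ ℓ → p.2 r = p.1 r) →
      ((p.2 ℓ' : ℕ) = (p.1 ℓ' : ℕ) + 1 ∧ ∀ r, r ≠ ℓ' → p.2 r = p.1 r) → ℓ = ℓ' := by
    rintro p ℓ ℓ' ⟨h1, h2⟩ ⟨h1', h2'⟩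
    by_contra hne
    have := h2 ℓ' (Ne.symm hne)
    rw [this] at h1'
    omega
  have hne12 : ∀ (p : (∀ ℓ, Fin (m ℓ)) × (∀ ℓ, Fin (m ℓ))) (ℓ : Fin d),
      ((p.2 ℓ : ℕ) = (p.1 ℓ : ℕ) + 1 ∧ ∀ r, r ≠ ℓ → p.2 r = p.1 r) → p.1 ≠ p.2 := by
    rintro p ℓ ⟨h1, -⟩ heq
    rw [← heq] at h1
    omega
  -- step 1 : expand tensorDes as a sum over pairs and swap sums
  have stepA : (∑ w : (∀ ℓ, Fin (m ℓ)) → Fin k, tensorDes w)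
      = ∑ p : (∀ ℓ, Fin (m ℓ)) × (∀ ℓ, Fin (m ℓ)), ∑ w : (∀ ℓ, Fin (m ℓ)) → Fin k,
          (if (w p.2 < w p.1 ∧ ∃ ℓ, ((p.2 ℓ : ℕ) = (p.1 ℓ : ℕ) + 1 ∧
              ∀ r, r ≠ ℓ → p.2 r = p.1 r)) then 1 else 0) := by
    rw [Finset.sum_comm]
    apply Finset.sum_congr rfl
    intro w _
    rw [tensorDes, Finset.card_filter]
  -- step 2 : per pair, split the existential into a sum over directions
  have stepB : ∀ p : (∀ ℓ, Fin (m ℓ)) × (∀ ℓ, Fin (m ℓ)),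
      (∑ w : (∀ ℓ, Fin (m ℓ)) → Fin k,
          (if (w p.2 < w p.1 ∧ ∃ ℓ, ((p.2 ℓ : ℕ) = (p.1 ℓ : ℕ) + 1 ∧
              ∀ r, r ≠ ℓ → p.2 r = p.1 r)) then 1 else 0))
        = ∑ ℓ, (if ((p.2 ℓ : ℕ) = (p.1 ℓ : ℕ) + 1 ∧ ∀ r, r ≠ ℓ → p.2 r = p.1 r) then
            (∑ w : (∀ ℓ, Fin (m ℓ)) → Fin k, if w p.2 < w p.1 then 1 else 0) else 0) := by
    intro p
    rw [← sum_ite_unique _ _ (huniq p)]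
    by_cases hb : ∃ ℓ, ((p.2 ℓ : ℕ) = (p.1 ℓ : ℕ) + 1 ∧ ∀ r, r ≠ ℓ → p.2 r = p.1 r)
    · simp [hb]
    · simp [hb]
  -- step 3 : the per-pair descent count doubled is constant
  have stepC : ∀ (p : (∀ ℓ, Fin (m ℓ)) × (∀ ℓ, Fin (m ℓ))), p.1 ≠ p.2 →
      2 * (∑ w : (∀ ℓ, Fin (m ℓ)) → Fin k, if w p.2 < w p.1 then 1 else 0)
        = k ^ (∏ ℓ, m ℓ) - k ^ ((∏ ℓ, m ℓ) - 1) := by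
    intro p hp
    rw [← Finset.card_filter]
    rw [← hcard]
    exact two_mul_card_lt k p.1 p.2 hp
  rw [stepA, Finset.sum_congr rfl fun p _ => stepB p]
  simp only [Finset.mul_sum]
  rw [Finset.sum_comm, Finset.sum_mul]
  apply Finset.sum_congr rfl
  intro ℓ _
  rw [← countA m ℓ, Finset.sum_mul]
  apply Finset.sum_congr rfl
  intro p _
  by_cases hc : ((p.2 ℓ : ℕ) = (p.1 ℓ : ℕ) + 1 ∧ ∀ r, r ≠ ℓ → p.2 r = p.1 r)
  · rw [if_pos hc, if_pos hc, one_mul]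
    exact stepC p (hne12 p ℓ hc)
  · rw [if_neg hc, if_neg hc, mul_zero, zero_mul]
/-- The total number of descents over all `m`-tensor words over `[k]` equals
`(1/2)·(d·∏ m ℓ − ∑ i, ∏_{ℓ ≠ i} m ℓ)·(k−1)·k^(∏ m ℓ − 1)`. -/
theorem total_descents_tensor_words (k d : ℕ) (hk : 1 ≤ k) (hd : 1 ≤ d)
    (m : Fin d → ℕ) (hm : ∀ ℓ, 1 ≤ m ℓ) :
    (∑ w : (∀ ℓ, Fin (m ℓ)) → Fin k, (tensorDes w : ℚ)) =
      (1 / 2) * ((d : ℚ) * ∏ ℓ, (m ℓ : ℚ) - ∑ i, ∏ ℓ ∈ Finset.univ.erase i, (m ℓ : ℚ)) *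
        ((k : ℚ) - 1) * (k : ℚ) ^ ((∏ ℓ, m ℓ) - 1) := by
  classical
  have hN : 1 ≤ ∏ ℓ, m ℓ := Finset.one_le_prod' fun ℓ _ => hm ℓ
  have hkpow : k ^ ((∏ ℓ, m ℓ) - 1) ≤ k ^ (∏ ℓ, m ℓ) :=
    Nat.pow_le_pow_right hk (by omega)
  have h1 : ((∑ ℓ, (m ℓ - 1) * ∏ r ∈ Finset.univ.erase ℓ, m r : ℕ) : ℚ)
      = (d : ℚ) * ∏ ℓ, (m ℓ : ℚ) - ∑ i, ∏ ℓ ∈ Finset.univ.erase i, (m ℓ : ℚ) := by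
    have e : ∀ ℓ : Fin d, (((m ℓ - 1) * ∏ r ∈ Finset.univ.erase ℓ, m r : ℕ) : ℚ)
        = ∏ r, (m r : ℚ) - ∏ r ∈ Finset.univ.erase ℓ, (m r : ℚ) := by
      intro ℓ
      push_cast [Nat.cast_sub (hm ℓ)]
      rw [sub_mul, one_mul,
        Finset.mul_prod_erase Finset.univ (fun r => ((m r : ℚ))) (Finset.mem_univ ℓ)]
    rw [Nat.cast_sum, Finset.sum_congr rfl fun ℓ _ => e ℓ, Finset.sum_sub_distrib,
      Finset.sum_const, Finset.card_univ, Fintype.card_fin, nsmul_eq_mul]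
  have h2 : ((k ^ (∏ ℓ, m ℓ) - k ^ ((∏ ℓ, m ℓ) - 1) : ℕ) : ℚ)
      = ((k : ℚ) - 1) * (k : ℚ) ^ ((∏ ℓ, m ℓ) - 1) := by
    rw [Nat.cast_sub hkpow]
    push_cast
    have hpow : (k : ℚ) ^ (∏ ℓ, m ℓ) = (k : ℚ) ^ ((∏ ℓ, m ℓ) - 1) * k := by
      rw [← pow_succ]
      congr 1
      omega
    rw [hpow]
    ring
  have keyQ : (2 : ℚ) * (∑ w : (∀ ℓ, Fin (m ℓ)) → Fin k, (tensorDes w : ℚ))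
      = ((d : ℚ) * ∏ ℓ, (m ℓ : ℚ) - ∑ i, ∏ ℓ ∈ Finset.univ.erase i, (m ℓ : ℚ)) *
          (((k : ℚ) - 1) * (k : ℚ) ^ ((∏ ℓ, m ℓ) - 1)) := by
    calc (2 : ℚ) * (∑ w : (∀ ℓ, Fin (m ℓ)) → Fin k, (tensorDes w : ℚ))
        = ((2 * ∑ w : (∀ ℓ, Fin (m ℓ)) → Fin k, tensorDes w : ℕ) : ℚ) := by
          push_cast
          ring
      _ = (((∑ ℓ, (m ℓ - 1) * ∏ r ∈ Finset.univ.erase ℓ, m r) *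
            (k ^ (∏ ℓ, m ℓ) - k ^ ((∏ ℓ, m ℓ) - 1)) : ℕ) : ℚ) := by
          rw [key_count]
      _ = _ := by rw [Nat.cast_mul, h1, h2]
  linear_combination (1 / 2 : ℚ) * keyQ
end

section
/- Assume additionally that m_ℓ ≥ 2 for every ℓ ∈ [d]. The total number of levels and cyclic levels over all cyclic m-tensor words over [k] equals d·(∏_{ℓ∈[d]} m_ℓ)·k^{(∏_{ℓ∈[d]} m_ℓ)−1}. That is, ∑_{w∈T(m,k)} cyclev(w) = d·m_1⋯m_d·k^{m_1⋯m_d−1}. -/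
/-- The number of levels of an `m`-tensor word `w` over `[k]`: pairs `(i, j)` of indices
with `w i = w j` and `j = i + e ℓ` for some `ℓ`. -/
def tensorLev {k d : ℕ} {m : Fin d → ℕ} (w : (∀ ℓ, Fin (m ℓ)) → Fin k) : ℕ :=
  (Finset.univ.filter fun p : (∀ ℓ, Fin (m ℓ)) × (∀ ℓ, Fin (m ℓ)) =>
      w p.1 = w p.2 ∧
        ∃ ℓ, ((p.2 ℓ : ℕ) = (p.1 ℓ : ℕ) + 1 ∧ ∀ r, r ≠ ℓ → p.2 r = p.1 r)).card

/-- The number of levels and cyclic levels of a cyclic `m`-tensor word `w` over `[k]`: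
levels together with pairs `(i, j)` for which there is a unique `ℓ` with
`i ℓ = m ℓ`, `j ℓ = 1` (in 0-indexed terms, `(i ℓ) + 1 = m ℓ` and `j ℓ = 0`),
`i r = j r` for all `r ≠ ℓ`, and `w i = w j`. -/
def tensorCycLev {k d : ℕ} {m : Fin d → ℕ} (w : (∀ ℓ, Fin (m ℓ)) → Fin k) : ℕ :=
  tensorLev w +
    (Finset.univ.filter fun p : (∀ ℓ, Fin (m ℓ)) × (∀ ℓ, Fin (m ℓ)) =>
        w p.1 = w p.2 ∧
          ∃ ℓ, (((p.1 ℓ : ℕ) + 1 = m ℓ ∧ (p.2 ℓ : ℕ) = 0 ∧ ∀ r, r ≠ ℓ → p.2 r = p.1 r) ∧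
            ∀ ℓ', ((p.1 ℓ' : ℕ) + 1 = m ℓ' ∧ (p.2 ℓ' : ℕ) = 0 ∧ ∀ r, r ≠ ℓ' → p.2 r = p.1 r) →
              ℓ' = ℓ)).card


section Aux

lemma card_filter_agree {k : ℕ} {I : Type*} [Fintype I] [DecidableEq I]
    (i j : I) (h : i ≠ j) :
    (Finset.univ.filter fun w : I → Fin k => w i = w j).card
      = k ^ (Fintype.card I - 1) := by
  have e : {w : I → Fin k // w i = w j} ≃ ({x : I // x ≠ j} → Fin k) :=
    { toFun := fun w x => w.1 x.1
      invFun := fun f => ⟨fun x => if hx : x = j then f ⟨i, h⟩ else f ⟨x, hx⟩, by simp [h]⟩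
      left_inv := fun w => by
        apply Subtype.ext; funext x
        by_cases hx : x = j
        · subst hx; simpa using w.2
        · simp [hx]
      right_inv := fun f => by
        funext x
        simp [x.2] }
  calc (Finset.univ.filter fun w : I → Fin k => w i = w j).card
      = Fintype.card {w : I → Fin k // w i = w j} := (Fintype.card_subtype _).symm
    _ = Fintype.card ({x : I // x ≠ j} → Fin k) := Fintype.card_congr e
    _ = k ^ (Fintype.card I - 1) := by
        rw [Fintype.card_fun, Fintype.card_fin]
        congr 1
        rw [Fintype.card_subtype_compl, Fintype.card_subtype_eq]

lemma sum_card_filter_agree {k : ℕ} {I : Type*} [Fintype I] [DecidableEq I]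
    (Q : I × I → Prop) [DecidablePred Q] (hQ : ∀ p, Q p → p.1 ≠ p.2) :
    (∑ w : I → Fin k,
        (Finset.univ.filter fun p : I × I => w p.1 = w p.2 ∧ Q p).card)
      = (Finset.univ.filter Q).card * k ^ (Fintype.card I - 1) := by
  simp only [Finset.card_filter]
  rw [Finset.sum_comm]
  have : ∀ p : I × I, (∑ w : I → Fin k, if w p.1 = w p.2 ∧ Q p then 1 else 0)
      = if Q p then k ^ (Fintype.card I - 1) else 0 := by
    intro p
    by_cases hp : Q p
    · rw [if_pos hp]
      rw [← card_filter_agree (k := k) p.1 p.2 (hQ p hp)]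
      rw [Finset.card_filter]
      exact Finset.sum_congr rfl fun w _ => by simp [hp]
    · simp [hp]
  rw [Finset.sum_congr rfl fun p _ => this p]
  rw [← Finset.sum_filter, Finset.sum_const, smul_eq_mul, ← Finset.card_filter]

lemma succ_mod_ne {n x : ℕ} (hn : 2 ≤ n) (hx : x < n) : (x + 1) % n ≠ x := by
  rcases (Nat.succ_le_of_lt hx).lt_or_eq with h | h
  · rw [Nat.mod_eq_of_lt h]; omega
  · rw [Nat.succ_eq_add_one] at h
    rw [h, Nat.mod_self]; omega

variable {d : ℕ} {m : Fin d → ℕ}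

/-- Cyclic successor in direction `ℓ`. -/
def succAt (hm : ∀ ℓ, 0 < m ℓ) (i : ∀ ℓ, Fin (m ℓ)) (ℓ : Fin d) : ∀ r, Fin (m r) :=
  Function.update i ℓ ⟨((i ℓ : ℕ) + 1) % m ℓ, Nat.mod_lt _ (hm ℓ)⟩

lemma succAt_same (hm : ∀ ℓ, 0 < m ℓ) (i : ∀ ℓ, Fin (m ℓ)) (ℓ : Fin d) :
    (succAt hm i ℓ ℓ : ℕ) = ((i ℓ : ℕ) + 1) % m ℓ := by
  simp [succAt]

lemma succAt_noteq (hm : ∀ ℓ, 0 < m ℓ) (i : ∀ ℓ, Fin (m ℓ)) (ℓ : Fin d)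
    {r : Fin d} (hr : r ≠ ℓ) : succAt hm i ℓ r = i r := by
  simp [succAt, Function.update_of_ne hr]

lemma card_QL_add_QC (hm : ∀ ℓ, 2 ≤ m ℓ) :
    (Finset.univ.filter fun p : (∀ ℓ, Fin (m ℓ)) × (∀ ℓ, Fin (m ℓ)) =>
        ∃ ℓ, ((p.2 ℓ : ℕ) = (p.1 ℓ : ℕ) + 1 ∧ ∀ r, r ≠ ℓ → p.2 r = p.1 r)).card
      + (Finset.univ.filter fun p : (∀ ℓ, Fin (m ℓ)) × (∀ ℓ, Fin (m ℓ)) =>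
          ∃ ℓ, (((p.1 ℓ : ℕ) + 1 = m ℓ ∧ (p.2 ℓ : ℕ) = 0 ∧ ∀ r, r ≠ ℓ → p.2 r = p.1 r) ∧
            ∀ ℓ', ((p.1 ℓ' : ℕ) + 1 = m ℓ' ∧ (p.2 ℓ' : ℕ) = 0 ∧ ∀ r, r ≠ ℓ' → p.2 r = p.1 r) →
              ℓ' = ℓ)).card
      = (∏ ℓ, m ℓ) * d := by
  classical
  have hm0 : ∀ ℓ, 0 < m ℓ := fun ℓ => lt_of_lt_of_le two_pos (hm ℓ)
  set I := ∀ ℓ, Fin (m ℓ)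
  set QL : I × I → Prop := fun p =>
    ∃ ℓ, ((p.2 ℓ : ℕ) = (p.1 ℓ : ℕ) + 1 ∧ ∀ r, r ≠ ℓ → p.2 r = p.1 r) with hQL
  set QC : I × I → Prop := fun p =>
    ∃ ℓ, (((p.1 ℓ : ℕ) + 1 = m ℓ ∧ (p.2 ℓ : ℕ) = 0 ∧ ∀ r, r ≠ ℓ → p.2 r = p.1 r) ∧
      ∀ ℓ', ((p.1 ℓ' : ℕ) + 1 = m ℓ' ∧ (p.2 ℓ' : ℕ) = 0 ∧ ∀ r, r ≠ ℓ' → p.2 r = p.1 r) →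
        ℓ' = ℓ) with hQC
  have hdisj : Disjoint (Finset.univ.filter QL) (Finset.univ.filter QC) := by
    rw [Finset.disjoint_filter]
    rintro p - ⟨ℓ, h1, h2⟩ ⟨ℓ', ⟨g1, g2, g3⟩, -⟩
    by_cases he : ℓ = ℓ'
    · subst he; omega
    · have hv : p.2 ℓ = p.1 ℓ := g3 ℓ (fun hx => he hx)
      have : (p.2 ℓ : ℕ) = (p.1 ℓ : ℕ) := by rw [hv]
      omega
  have hcard : (Finset.univ.filter fun p : I × I => QL p ∨ QC p).card
      = (∏ ℓ, m ℓ) * d := by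
    have key := Finset.card_bij
      (s := (Finset.univ : Finset (I × Fin d)))
      (t := Finset.univ.filter fun p : I × I => QL p ∨ QC p)
      (i := fun a _ => (a.1, succAt hm0 a.1 a.2))
      (hi := ?_) (i_inj := ?_) (i_surj := ?_)
    · rw [← key, Finset.card_univ, Fintype.card_prod, Fintype.card_fin]
      congr 1
      rw [Fintype.card_pi]
      simp
    · -- maps into t
      rintro ⟨a, ℓ⟩ -
      simp only [Finset.mem_filter, Finset.mem_univ, true_and]
      rcases (Nat.succ_le_of_lt (a ℓ).2).lt_or_eq with h | h
      · rw [Nat.succ_eq_add_one] at h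
        left
        refine ⟨ℓ, ?_, fun r hr => succAt_noteq hm0 a ℓ hr⟩
        show (succAt hm0 a ℓ ℓ : ℕ) = (a ℓ : ℕ) + 1
        rw [succAt_same, Nat.mod_eq_of_lt h]
      · rw [Nat.succ_eq_add_one] at h
        right
        have h0 : (succAt hm0 a ℓ ℓ : ℕ) = 0 := by
          rw [succAt_same, h, Nat.mod_self]
        refine ⟨ℓ, ⟨h, h0, fun r hr => succAt_noteq hm0 a ℓ hr⟩, ?_⟩
        rintro ℓ' ⟨g1, g2, g3⟩
        by_contra he
        have hv : succAt hm0 a ℓ ℓ = a ℓ := g3 ℓ (fun hx => he hx.symm)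
        have hv' : (succAt hm0 a ℓ ℓ : ℕ) = (a ℓ : ℕ) := by rw [hv]
        have := hm ℓ
        omega
    · -- injective
      intro x hx y hy hab
      obtain ⟨a, ℓ⟩ := x
      obtain ⟨a', ℓ'⟩ := y
      simp only [Prod.mk.injEq] at hab ⊢
      obtain ⟨h1, h2⟩ := hab
      subst h1
      refine ⟨rfl, ?_⟩
      by_contra he
      have hv : (succAt hm0 a ℓ ℓ : ℕ) = (succAt hm0 a ℓ' ℓ : ℕ) := by rw [h2]
      rw [succAt_same, succAt_noteq hm0 a ℓ' (fun hx => he hx)] at hv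
      exact succ_mod_ne (hm ℓ) (a ℓ).2 hv
    · -- surjective
      rintro ⟨p1, p2⟩ hp
      simp only [Finset.mem_filter, Finset.mem_univ, true_and] at hp
      rcases hp with ⟨ℓ, h1, h2⟩ | ⟨ℓ, ⟨g1, g2, g3⟩, -⟩
      · refine ⟨(p1, ℓ), Finset.mem_univ _, ?_⟩
        refine Prod.ext rfl ?_
        show succAt hm0 p1 ℓ = p2
        funext r
        by_cases hr : r = ℓ
        · subst hr
          apply Fin.ext
          rw [succAt_same, ← h1, Nat.mod_eq_of_lt (p2 r).2]
        · rw [succAt_noteq hm0 p1 ℓ hr]; exact (h2 r hr).symm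
      · refine ⟨(p1, ℓ), Finset.mem_univ _, ?_⟩
        refine Prod.ext rfl ?_
        show succAt hm0 p1 ℓ = p2
        funext r
        by_cases hr : r = ℓ
        · subst hr
          apply Fin.ext
          rw [succAt_same, g1, Nat.mod_self, g2]
        · rw [succAt_noteq hm0 p1 ℓ hr]; exact (g3 r hr).symm
  rw [← hcard, Finset.filter_or, Finset.card_union_of_disjoint hdisj]

end Aux

/-- The total number of levels and cyclic levels over all cyclic `m`-tensor words
over `[k]` (with every `m ℓ ≥ 2`) equals `d·(∏ m ℓ)·k^(∏ m ℓ − 1)`. -/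
theorem total_cyclic_levels_tensor_words (k d : ℕ) (hk : 1 ≤ k) (hd : 1 ≤ d)
    (m : Fin d → ℕ) (hm : ∀ ℓ, 2 ≤ m ℓ) :
    (∑ w : (∀ ℓ, Fin (m ℓ)) → Fin k, (tensorCycLev w : ℚ)) =
      (d : ℚ) * (∏ ℓ, (m ℓ : ℚ)) * (k : ℚ) ^ ((∏ ℓ, m ℓ) - 1) := by
  have hm0 : ∀ ℓ, 0 < m ℓ := fun ℓ => lt_of_lt_of_le two_pos (hm ℓ)
  have hneL : ∀ p : (∀ ℓ, Fin (m ℓ)) × (∀ ℓ, Fin (m ℓ)),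
      (∃ ℓ, ((p.2 ℓ : ℕ) = (p.1 ℓ : ℕ) + 1 ∧ ∀ r, r ≠ ℓ → p.2 r = p.1 r)) → p.1 ≠ p.2 := by
    rintro p ⟨ℓ, h1, h2⟩ h
    have : (p.1 ℓ : ℕ) = (p.2 ℓ : ℕ) := by rw [congrFun h ℓ]
    omega
  have hneC : ∀ p : (∀ ℓ, Fin (m ℓ)) × (∀ ℓ, Fin (m ℓ)),
      (∃ ℓ, (((p.1 ℓ : ℕ) + 1 = m ℓ ∧ (p.2 ℓ : ℕ) = 0 ∧ ∀ r, r ≠ ℓ → p.2 r = p.1 r) ∧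
        ∀ ℓ', ((p.1 ℓ' : ℕ) + 1 = m ℓ' ∧ (p.2 ℓ' : ℕ) = 0 ∧ ∀ r, r ≠ ℓ' → p.2 r = p.1 r) →
          ℓ' = ℓ)) → p.1 ≠ p.2 := by
    rintro p ⟨ℓ, ⟨g1, g2, g3⟩, -⟩ h
    have : (p.1 ℓ : ℕ) = (p.2 ℓ : ℕ) := by rw [congrFun h ℓ]
    have := hm ℓ
    omega
  have hci : Fintype.card (∀ ℓ, Fin (m ℓ)) = ∏ ℓ, m ℓ := by
    rw [Fintype.card_pi]; simp
  have key : (∑ w : (∀ ℓ, Fin (m ℓ)) → Fin k, tensorCycLev w)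
      = ((∏ ℓ, m ℓ) * d) * k ^ ((∏ ℓ, m ℓ) - 1) := by
    simp only [tensorCycLev, tensorLev]
    rw [Finset.sum_add_distrib,
      sum_card_filter_agree _ hneL, sum_card_filter_agree _ hneC,
      ← add_mul, hci, card_QL_add_QC hm]
  have hcast : (∑ w : (∀ ℓ, Fin (m ℓ)) → Fin k, (tensorCycLev w : ℚ))
      = ((∑ w : (∀ ℓ, Fin (m ℓ)) → Fin k, tensorCycLev w : ℕ) : ℚ) := by
    rw [Nat.cast_sum]
  rw [hcast, key]
  push_cast
  ring
end

section
/- Let P = m_1⋯m_d, let a_d = ∑_{w∈T(m,k)} des(w), and for each integer n ≥ 1 let a'(n) denote the total number of descents over all (m_1,…,m_d,n)-tensor words over [k]. Then the following identity of formal power series in ℚ[[x]] holds: (∑_{n≥1} a'(n)·x^n)·(1 − k^P·x)^2 = a_d·x + (1/2)·(k−1)·k^{2P−1}·P·x^2. -/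
/-- The number of descents of an `(m₁,…,m_d,n)`-tensor word `v` over `[k]`, where the
index set is represented as `([m₁]×⋯×[m_d]) × [n]`; descents are taken in all `d + 1`
directions. -/
def extTensorDes {k d n : ℕ} {m : Fin d → ℕ}
    (v : ((∀ ℓ, Fin (m ℓ)) × Fin n) → Fin k) : ℕ :=
  (Finset.univ.filter fun p :
      ((∀ ℓ, Fin (m ℓ)) × Fin n) × ((∀ ℓ, Fin (m ℓ)) × Fin n) =>
      v p.2 < v p.1 ∧
        ((p.2.2 = p.1.2 ∧
            ∃ ℓ, ((p.2.1 ℓ : ℕ) = (p.1.1 ℓ : ℕ) + 1 ∧ ∀ r, r ≠ ℓ → p.2.1 r = p.1.1 r)) ∨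
          (p.2.1 = p.1.1 ∧ (p.2.2 : ℕ) = (p.1.2 : ℕ) + 1))).card

/-!
Summed over all words `v : I → [k]`, a fixed directed edge `(i, j)` is a descent exactly
`#{v | v j < v i} = C(k, 2) · k ^ (|I| - 2)` times, so the total number of descents over all
words is `#edges · C(k, 2) · k ^ (|I| - 2)`. The grid `[m₁] × ⋯ × [m_d] × [n]` is the box
product of the `d`-dimensional grid (with `E` edges and `P` vertices) and a path on `n`
vertices, so it has `E n + P (n - 1)` edges and `a'(n) = C(k,2)/k² · ((E + P) n - P) · (k^P)^n`.
This is an affine function of `n` times a geometric sequence of ratio `q = k^P`, so multiplying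
its generating function by `(1 - q x)²` leaves a polynomial of degree two.
-/

open Finset

theorem card_filter_snd_lt_fst (k : ℕ) : #{p : Fin k × Fin k | p.2 < p.1} = k.choose 2 := by
  have h := Fintype.card_product_filter_lt (α := Fin k)
  rw [Fintype.card_fin] at h
  rw [← h]
  exact card_equiv (Equiv.prodComm _ _) (by simp)

section Descents

variable {I : Type*} [Fintype I] {k : ℕ}

def numDescents (r : I → I → Prop) [DecidableRel r] (v : I → Fin k) : ℕ :=
  #{p : I × I | v p.2 < v p.1 ∧ r p.1 p.2}

theorem card_filter_apply_lt_apply [DecidableEq I] {i j : I} (hij : i ≠ j) :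
    #{v : I → Fin k | v j < v i} = k.choose 2 * k ^ (Fintype.card I - 2) := by
  -- `v ↦ ((v i, v j), v restricted to the other coordinates)`
  have e : {v : I → Fin k // v j < v i} ≃
      {p : Fin k × Fin k // p.2 < p.1} × ({y : {x // x ≠ i} // y ≠ ⟨j, hij.symm⟩} → Fin k) :=
    (((Equiv.funSplitAt i (Fin k)).trans ((Equiv.refl _).prodCongr
      (Equiv.funSplitAt ⟨j, hij.symm⟩ (Fin k)))).trans (Equiv.prodAssoc _ _ _).symm
      |>.subtypeEquiv (q := fun t => t.1.2 < t.1.1) fun _ => Iff.rfl).trans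
      (Equiv.prodSubtypeFstEquivSubtypeProd (p := fun p : Fin k × Fin k => p.2 < p.1))
  rw [← Fintype.card_subtype, Fintype.card_congr e, Fintype.card_prod, Fintype.card_subtype,
    card_filter_snd_lt_fst]
  simp [Nat.sub_sub]

theorem sum_numDescents [DecidableEq I] (r : I → I → Prop) [DecidableRel r] [Std.Irrefl r] :
    ∑ v : I → Fin k, numDescents r v =
      #{p : I × I | r p.1 p.2} * (k.choose 2 * k ^ (Fintype.card I - 2)) := by
  simp only [numDescents, card_filter]
  rw [sum_comm, sum_mul]
  refine sum_congr rfl fun p _ => ?_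
  by_cases hp : r p.1 p.2
  · simp only [hp, and_true, if_true, one_mul, ← card_filter]
    exact card_filter_apply_lt_apply (ne_of_irrefl hp)
  · simp [hp]

theorem card_rel_eq_zero_of_card_lt_two (r : I → I → Prop) [DecidableRel r] [Std.Irrefl r]
    (hI : Fintype.card I < 2) : #{p : I × I | r p.1 p.2} = 0 := by
  have : Subsingleton I := Fintype.card_le_one_iff_subsingleton.mp (by omega)
  simp only [card_eq_zero, filter_eq_empty_iff]
  exact fun p _ hp => ne_of_irrefl hp (Subsingleton.elim _ _)

theorem cast_sum_numDescents {K : Type*} [Field K] [DecidableEq I] (r : I → I → Prop)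
    [DecidableRel r] [Std.Irrefl r] (hk : (k : K) ≠ 0) :
    ∑ v : I → Fin k, (numDescents r v : K) =
      #{p : I × I | r p.1 p.2} * (k.choose 2 / k ^ 2) * k ^ Fintype.card I := by
  rw [← Nat.cast_sum, sum_numDescents r]
  rcases lt_or_ge (Fintype.card I) 2 with hI | hI
  · simp [card_rel_eq_zero_of_card_lt_two r hI]
  · push_cast
    rw [pow_sub₀ _ hk hI]
    ring

end Descents

section BoxProduct

variable {α β : Type*}

def boxProdRel (r : α → α → Prop) (s : β → β → Prop) (x y : α × β) : Prop :=
  (y.2 = x.2 ∧ r x.1 y.1) ∨ (y.1 = x.1 ∧ s x.2 y.2)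

instance [DecidableEq α] [DecidableEq β] (r : α → α → Prop) (s : β → β → Prop) [DecidableRel r]
    [DecidableRel s] : DecidableRel (boxProdRel r s) :=
  fun _ _ => inferInstanceAs (Decidable ((_ ∧ _) ∨ (_ ∧ _)))

instance (r : α → α → Prop) (s : β → β → Prop) [Std.Irrefl r] [Std.Irrefl s] :
    Std.Irrefl (boxProdRel r s) where
  irrefl _ := by
    rintro (⟨-, h⟩ | ⟨-, h⟩)
    exacts [irrefl _ h, irrefl _ h]

theorem card_boxProdRel [Fintype α] [Fintype β] [DecidableEq α] [DecidableEq β]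
    (r : α → α → Prop) (s : β → β → Prop) [DecidableRel r] [DecidableRel s] [Std.Irrefl r] :
    #{p : (α × β) × (α × β) | boxProdRel r s p.1 p.2} =
      #{p : α × α | r p.1 p.2} * Fintype.card β + Fintype.card α * #{p : β × β | s p.1 p.2} := by
  have hr : #{p : (α × β) × (α × β) | p.2.2 = p.1.2 ∧ r p.1.1 p.2.1} =
      #((univ.filter fun p : α × α => r p.1 p.2) ×ˢ (univ : Finset β)) :=
    card_nbij' (fun p => ((p.1.1, p.2.1), p.1.2)) (fun q => ((q.1.1, q.2), (q.1.2, q.2)))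
      (by simp [Set.MapsTo]) (by simp [Set.MapsTo]) (by simp +contextual [Set.LeftInvOn])
      (by simp [Set.RightInvOn, Set.LeftInvOn])
  have hs : #{p : (α × β) × (α × β) | p.2.1 = p.1.1 ∧ s p.1.2 p.2.2} =
      #((univ : Finset α) ×ˢ (univ.filter fun p : β × β => s p.1 p.2)) :=
    card_nbij' (fun p => (p.1.1, (p.1.2, p.2.2))) (fun q => ((q.1, q.2.1), (q.1, q.2.2)))
      (by simp [Set.MapsTo]) (by simp [Set.MapsTo]) (by simp +contextual [Set.LeftInvOn])
      (by simp [Set.RightInvOn, Set.LeftInvOn])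
  have hsplit : univ.filter (fun p : (α × β) × (α × β) => boxProdRel r s p.1 p.2) =
      univ.filter (fun p : (α × β) × (α × β) => p.2.2 = p.1.2 ∧ r p.1.1 p.2.1) ∪
        univ.filter (fun p : (α × β) × (α × β) => p.2.1 = p.1.1 ∧ s p.1.2 p.2.2) := by
    ext; simp only [mem_union, mem_filter, mem_univ, true_and]; rfl
  rw [hsplit, card_union_of_disjoint, hr, hs, card_product, card_product, card_univ, card_univ]
  rw [disjoint_filter]
  rintro p - ⟨-, h⟩ ⟨h', -⟩
  exact irrefl _ (h' ▸ h)

end BoxProduct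

def succRel (n : ℕ) (i j : Fin n) : Prop := (j : ℕ) = i + 1

instance (n : ℕ) : DecidableRel (succRel n) := fun _ _ => inferInstanceAs (Decidable (_ = _))

instance (n : ℕ) : Std.Irrefl (succRel n) where
  irrefl _ h := by simp [succRel] at h

theorem card_succRel (n : ℕ) : #{p : Fin n × Fin n | succRel n p.1 p.2} = n - 1 := by
  rw [← card_range (n - 1)]
  refine card_bij' (fun p _ => (p.1 : ℕ)) (fun i hi => (⟨i, ?_⟩, ⟨i + 1, ?_⟩)) ?_ ?_ ?_ ?_
  all_goals simp only [mem_range, mem_filter, mem_univ, true_and] at *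
  · omega
  · omega
  · exact fun p (hp : _ = _) => by omega
  · exact fun _ _ => rfl
  · exact fun p (hp : _ = _) => Prod.ext rfl (Fin.ext hp.symm)
  · exact fun _ _ => trivial

def gridAdj {d : ℕ} (m : Fin d → ℕ) (i j : ∀ ℓ, Fin (m ℓ)) : Prop :=
  ∃ ℓ, (j ℓ : ℕ) = i ℓ + 1 ∧ ∀ r, r ≠ ℓ → j r = i r

instance {d : ℕ} (m : Fin d → ℕ) : DecidableRel (gridAdj m) :=
  fun _ _ => inferInstanceAs (Decidable (∃ _, _))

instance {d : ℕ} (m : Fin d → ℕ) : Std.Irrefl (gridAdj m) where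
  irrefl _ := fun ⟨_, h, _⟩ => by omega

section TensorWords

variable {k d : ℕ} {m : Fin d → ℕ}

theorem tensorDes_eq_numDescents (w : (∀ ℓ, Fin (m ℓ)) → Fin k) :
    tensorDes w = numDescents (gridAdj m) w := rfl

theorem extTensorDes_eq_numDescents {n : ℕ} (v : ((∀ ℓ, Fin (m ℓ)) × Fin n) → Fin k) :
    extTensorDes v = numDescents (boxProdRel (gridAdj m) (succRel n)) v := rfl

theorem cast_sum_tensorDes {K : Type*} [Field K] (hk : (k : K) ≠ 0) :
    ∑ w : (∀ ℓ, Fin (m ℓ)) → Fin k, (tensorDes w : K) =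
      #{p : (∀ ℓ, Fin (m ℓ)) × (∀ ℓ, Fin (m ℓ)) | gridAdj m p.1 p.2} *
        (k.choose 2 / k ^ 2) * k ^ ∏ ℓ, m ℓ := by
  simp [tensorDes_eq_numDescents, cast_sum_numDescents _ hk, Fintype.card_pi]

theorem cast_sum_extTensorDes {K : Type*} [Field K] (hk : (k : K) ≠ 0) {n : ℕ} (hn : n ≠ 0) :
    ∑ v : ((∀ ℓ, Fin (m ℓ)) × Fin n) → Fin k, (extTensorDes v : K) =
      ((#{p : (∀ ℓ, Fin (m ℓ)) × (∀ ℓ, Fin (m ℓ)) | gridAdj m p.1 p.2} + ∏ ℓ, (m ℓ : K)) *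
        (k.choose 2 / k ^ 2) * n - (∏ ℓ, (m ℓ : K)) * (k.choose 2 / k ^ 2)) *
          ((k : K) ^ ∏ ℓ, m ℓ) ^ n := by
  simp only [extTensorDes_eq_numDescents, cast_sum_numDescents _ hk, card_boxProdRel,
    card_succRel, Fintype.card_prod, Fintype.card_pi, Fintype.card_fin]
  push_cast [Nat.one_le_iff_ne_zero.mpr hn]
  ring

end TensorWords

namespace PowerSeries

theorem mk_mul_one_sub_C_mul_X_sq {R : Type*} [CommRing R] {f : ℕ → R} {a b q : R}
    (hf0 : f 0 = 0) (hf : ∀ n ≠ 0, f n = (a * n - b) * q ^ n) :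
    mk f * (1 - C q * X) ^ 2 = C ((a - b) * q) * X + C (b * q ^ 2) * X ^ 2 := by
  have hsq : mk f * (1 - C q * X) ^ 2 =
      mk f - C (2 * q) * (mk f * X ^ 1) + C (q ^ 2) * (mk f * X ^ 2) := by
    simp only [map_mul, map_pow, map_ofNat]
    ring
  rw [hsq]
  ext N
  simp only [map_add, map_sub, coeff_C_mul, coeff_mul_X_pow', coeff_mk, coeff_X, coeff_C]
  rcases N with _ | _ | _ | n <;> simp [hf0, hf] <;> ring

end PowerSeries

theorem cast_mul_choose_two_div_sq_mul_pow_sq {K : Type*} [Field K] [NeZero (2 : K)] {k : ℕ}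
    (hk : (k : K) ≠ 0) (P : ℕ) :
    P * ((k.choose 2 : K) / k ^ 2) * ((k : K) ^ P) ^ 2 = 1 / 2 * (k - 1) * k ^ (2 * P - 1) * P := by
  rw [Nat.cast_choose_two]
  rcases Nat.eq_zero_or_pos P with rfl | hP
  · simp
  · have hpow : (k : K) ^ (2 * P) = k ^ (2 * P - 1) * k := by
      rw [← pow_succ, Nat.sub_add_cancel (by omega)]
    rw [← pow_mul, mul_comm P 2, hpow]
    field_simp

theorem gen_fun_total_descents_general (k d : ℕ) (hk : 1 ≤ k)
    (m : Fin d → ℕ) :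
    (PowerSeries.mk fun n => if n = 0 then (0 : ℚ) else
        ∑ v : ((∀ ℓ, Fin (m ℓ)) × Fin n) → Fin k, (extTensorDes v : ℚ)) *
      (1 - PowerSeries.C ((k : ℚ) ^ (∏ ℓ, m ℓ)) * PowerSeries.X) ^ 2 =
      PowerSeries.C (∑ w : (∀ ℓ, Fin (m ℓ)) → Fin k, (tensorDes w : ℚ)) *
          PowerSeries.X +
        PowerSeries.C ((1 / 2) * ((k : ℚ) - 1) * (k : ℚ) ^ (2 * (∏ ℓ, m ℓ) - 1) *
            ∏ ℓ, (m ℓ : ℚ)) *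
          PowerSeries.X ^ 2 := by
  have hk0 : (k : ℚ) ≠ 0 := Nat.cast_ne_zero.mpr (by omega)
  rw [PowerSeries.mk_mul_one_sub_C_mul_X_sq rfl fun n hn => by
      rw [if_neg hn, cast_sum_extTensorDes hk0 hn],
    cast_sum_tensorDes hk0, ← Nat.cast_prod, ← cast_mul_choose_two_div_sq_mul_pow_sq hk0]
  congr 3
  ring

/-- Let `P = ∏ m ℓ`, `a_d` the total number of descents over all `m`-tensor words over
`[k]`, and `a'(n)` the total number of descents over all `(m₁,…,m_d,n)`-tensor words over
`[k]`. Then `(∑_{n ≥ 1} a'(n) xⁿ)·(1 − k^P x)² = a_d x + (1/2)(k−1)k^(2P−1) P x²`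
as formal power series over `ℚ`. -/
theorem gen_fun_total_descents (k d : ℕ) (hk : 1 ≤ k) (hd : 1 ≤ d)
    (m : Fin d → ℕ) (hm : ∀ ℓ, 1 ≤ m ℓ) :
    (PowerSeries.mk fun n => if n = 0 then (0 : ℚ) else
        ∑ v : ((∀ ℓ, Fin (m ℓ)) × Fin n) → Fin k, (extTensorDes v : ℚ)) *
      (1 - PowerSeries.C ((k : ℚ) ^ (∏ ℓ, m ℓ)) * PowerSeries.X) ^ 2 =
      PowerSeries.C (∑ w : (∀ ℓ, Fin (m ℓ)) → Fin k, (tensorDes w : ℚ)) *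
          PowerSeries.X +
        PowerSeries.C ((1 / 2) * ((k : ℚ) - 1) * (k : ℚ) ^ (2 * (∏ ℓ, m ℓ) - 1) *
            ∏ ℓ, (m ℓ : ℚ)) *
          PowerSeries.X ^ 2 :=
  gen_fun_total_descents_general k d hk m
end

section
/- The maximum of des(x) over all words x ∈ [k]^n equals ⌊n(k−1)/k⌋. -/
/-- The number of descents of a word `x ∈ [k]ⁿ`: indices `i` with `x i > x (i+1)`,
encoded as pairs `(p₁, p₂)` of positions with `p₂ = p₁ + 1` and `x p₂ < x p₁`. -/
def wordDes {k n : ℕ} (x : Fin n → Fin k) : ℕ :=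
  (Finset.univ.filter fun p : Fin n × Fin n =>
      (p.2 : ℕ) = (p.1 : ℕ) + 1 ∧ x p.2 < x p.1).card

lemma arith_aux (k n : ℕ) (hk : 1 ≤ k) (hn : 1 ≤ n) :
    n * (k - 1) / k = (n - 1) - (n - 1) / k := by
  have h2 : k * ((n-1)/k) + (n-1) % k = n - 1 := Nat.div_add_mod (n-1) k
  set q := (n - 1) / k
  set r := (n - 1) % k
  have hrk : r < k := Nat.mod_lt _ hk
  have hqn : q ≤ n - 1 := Nat.div_le_self _ _
  have key : n * (k - 1) = (k - 1 - r) + (n - 1 - q) * k := by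
    have h3 : r ≤ k - 1 := by omega
    zify [hk, hn, hqn, h3]
    have h2' : (k:ℤ) * q + r = (n:ℤ) - 1 := by
      have := h2
      zify [hn] at this
      linarith
    ring_nf
    linarith [h2']
  rw [key, Nat.add_mul_div_right _ _ (by omega : 0 < k),
    Nat.div_eq_of_lt (by omega), Nat.zero_add]

/-- strictly decreasing chain -/
lemma chain_aux (y : ℕ → ℕ) (a : ℕ) :
    ∀ m, (∀ i, i < m → y (a + i + 1) < y (a + i)) → y (a + m) + m ≤ y a := by
  intro m
  induction m with
  | zero => simp
  | succ m ih =>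
    intro h
    have h1 := ih (fun i hi => h i (by omega))
    have h2 := h m (by omega)
    have e : a + (m + 1) = a + m + 1 := by omega
    rw [e]
    omega

lemma wordDes_eq {k n : ℕ} (x : Fin n → Fin k) (y : ℕ → ℕ)
    (hy : ∀ (i : ℕ) (h : i < n), y i = x ⟨i, h⟩) :
    wordDes x = ((Finset.range (n-1)).filter fun i => y (i+1) < y i).card := by
  apply Finset.card_bij (fun (p : Fin n × Fin n) _ => (p.1 : ℕ))
  · rintro ⟨p1, p2⟩ hp
    simp only [Finset.mem_filter, Finset.mem_univ, true_and] at hp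
    obtain ⟨he, hlt⟩ := hp
    have h2 : (p2 : ℕ) < n := p2.isLt
    simp only [Finset.mem_filter, Finset.mem_range]
    constructor
    · omega
    · rw [hy ((p1:ℕ)+1) (by omega), hy (p1:ℕ) p1.isLt]
      have e1 : (⟨(p1:ℕ)+1, by omega⟩ : Fin n) = p2 := by
        apply Fin.ext; simp [he]
      have e2 : (⟨(p1:ℕ), p1.isLt⟩ : Fin n) = p1 := by apply Fin.ext; simp
      rw [e1, e2]
      exact hlt
  · rintro ⟨p1, p2⟩ hp ⟨q1, q2⟩ hq hpq
    simp only [Finset.mem_filter, Finset.mem_univ, true_and] at hp hq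
    simp only at hpq
    have e1 : p1 = q1 := Fin.ext hpq
    have e2 : p2 = q2 := Fin.ext (by omega)
    simp_all
  · intro b hb
    simp only [Finset.mem_filter, Finset.mem_range] at hb
    obtain ⟨hb1, hb2⟩ := hb
    refine ⟨(⟨b, by omega⟩, ⟨b+1, by omega⟩), ?_, rfl⟩
    refine Finset.mem_filter.mpr ⟨Finset.mem_univ _, rfl, ?_⟩
    rw [hy b (by omega), hy (b+1) (by omega)] at hb2
    exact hb2

/-- upper bound on the descent count -/
lemma descents_le (k n : ℕ) (hk : 1 ≤ k) (y : ℕ → ℕ) (hy : ∀ i < n, y i < k) :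
    ((Finset.range (n-1)).filter fun i => y (i+1) < y i).card ≤ (n-1) - (n-1)/k := by
  set N := n - 1 with hN
  set q := N / k with hq
  set D := (Finset.range N).filter fun i => y (i+1) < y i with hD
  set C := (Finset.range N).filter fun i => ¬ y (i+1) < y i with hC
  have hsum : D.card + C.card = N := by
    rw [hD, hC]
    rw [Finset.card_filter_add_card_filter_not (s := Finset.range N)
      (p := fun i => y (i+1) < y i), Finset.card_range]
  suffices h : q ≤ C.card by omega
  have hqk : q * k ≤ N := Nat.div_mul_le_self N k
  have hwin : ∀ j < q, ∃ i, j*k ≤ i ∧ i < j*k + k ∧ ¬ y (i+1) < y i := by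
    intro j hj
    by_contra hcon
    push_neg at hcon
    have hjk : j*k + k ≤ q * k := by
      have h' : (j+1) * k ≤ q * k := Nat.mul_le_mul_right k (by omega)
      have := Nat.add_one_mul j k
      omega
    have hchain : ∀ i, i < k → y (j*k + i + 1) < y (j*k + i) :=
      fun i hi => hcon (j*k + i) (by omega) (by omega)
    have := chain_aux y (j*k) k hchain
    have h1 : y (j*k) < k := hy _ (by omega)
    omega
  classical
  set f : ℕ → ℕ := fun j => if h : ∃ i, j*k ≤ i ∧ i < j*k + k ∧ ¬ y (i+1) < y i
    then Nat.find h else 0 with hf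
  have hfmem : ∀ j < q, f j ∈ C ∧ j*k ≤ f j ∧ f j < j*k + k := by
    intro j hj
    have h := hwin j hj
    rw [hf]
    simp only [dif_pos h]
    have hspec := Nat.find_spec h
    have hjk : j*k + k ≤ q * k := by
      have h' : (j+1) * k ≤ q * k := Nat.mul_le_mul_right k (by omega)
      have := Nat.add_one_mul j k
      omega
    refine ⟨?_, hspec.1, hspec.2.1⟩
    simp only [hC, Finset.mem_filter, Finset.mem_range]
    exact ⟨by omega, hspec.2.2⟩
  calc q = (Finset.range q).card := (Finset.card_range q).symm
    _ ≤ C.card := by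
        apply Finset.card_le_card_of_injOn f
        · intro j hj
          exact (hfmem j (Finset.mem_range.mp hj)).1
        · intro j1 hj1 j2 hj2 he
          simp only [Finset.coe_range, Set.mem_Iio] at hj1 hj2
          obtain ⟨-, h1a, h1b⟩ := hfmem j1 hj1
          obtain ⟨-, h2a, h2b⟩ := hfmem j2 hj2
          rcases lt_trichotomy j1 j2 with h | h | h
          · exfalso
            have h' : (j1+1)*k ≤ j2*k := Nat.mul_le_mul_right k (by omega)
            have := Nat.add_one_mul j1 k
            omega
          · exact h
          · exfalso
            have h' : (j2+1)*k ≤ j1*k := Nat.mul_le_mul_right k (by omega)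
            have := Nat.add_one_mul j2 k
            omega

/-- The maximum of `des x` over all words `x ∈ [k]ⁿ` equals `⌊n(k−1)/k⌋`. -/
theorem max_descents_words (k n : ℕ) (hk : 1 ≤ k) (hn : 1 ≤ n) :
    IsGreatest {a : ℕ | ∃ x : Fin n → Fin k, wordDes x = a} (n * (k - 1) / k) := by
  rw [arith_aux k n hk hn]
  constructor
  · -- membership: the word i ↦ k - 1 - (i % k)
    by_cases hk1 : k = 1
    · subst hk1
      refine ⟨fun _ => ⟨0, one_pos⟩, ?_⟩
      rw [wordDes_eq _ (fun _ => 0) (fun i h => rfl)]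
      simp
    · have hk2 : 2 ≤ k := by omega
      set y : ℕ → ℕ := fun i => k - 1 - (i % k) with hy
      have hylt : ∀ i : ℕ, y i < k := fun i =>
        lt_of_le_of_lt (Nat.sub_le _ _) (Nat.sub_lt hk one_pos)
      refine ⟨fun i => ⟨y (i : ℕ), hylt i⟩, ?_⟩
      rw [wordDes_eq _ y (fun i h => rfl)]
      have hcong : ∀ i ∈ Finset.range (n-1), (y (i+1) < y i) ↔ ¬ (k ∣ (i+1)) := by
        intro i _
        have hr : i % k < k := Nat.mod_lt _ hk
        have hmod : (i+1) % k = (i % k + 1) % k := by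
          conv_lhs => rw [Nat.add_mod]
          rw [Nat.mod_eq_of_lt hk2]
        rw [Nat.dvd_iff_mod_eq_zero]
        simp only [hy]
        rcases Nat.lt_or_ge (i % k) (k-1) with h | h
        · have hm2 : (i+1) % k = i % k + 1 := by
            rw [hmod, Nat.mod_eq_of_lt (by omega)]
          rw [hm2]
          constructor
          · intro _; omega
          · intro _; omega
        · have hr1 : i % k = k - 1 := by omega
          have hm2 : (i+1) % k = 0 := by
            rw [hmod, hr1, Nat.sub_add_cancel hk, Nat.mod_self]
          rw [hm2, hr1]
          constructor
          · intro hlt; omega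
          · intro hne; exact absurd rfl hne
      rw [Finset.filter_congr hcong]
      have h1 := Finset.card_filter_add_card_filter_not
        (s := Finset.range (n-1)) (p := fun i => k ∣ (i+1))
      rw [Finset.card_range] at h1
      have h2 := Nat.card_multiples (n-1) k
      omega
  · rintro a ⟨x, rfl⟩
    classical
    set y : ℕ → ℕ := fun i => if h : i < n then (x ⟨i, h⟩ : ℕ) else 0 with hy
    rw [wordDes_eq x y (fun i h => by simp [hy, h])]
    exact descents_le k n hk y (fun i hi => by simp [hy, hi, (x ⟨i, hi⟩).isLt])
end

section
/- The maximum of cycdes(x) over all words x ∈ [k]^n equals ⌊n(k−1)/k⌋. -/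
/-- The number of descents and cyclic descents of a cyclic word `x ∈ [k]ⁿ`:
the descents together with the extra cyclic descent at `i = n` when `x n > x 1`. -/
def wordCycDes {k n : ℕ} (x : Fin n → Fin k) : ℕ :=
  wordDes x +
    (Finset.univ.filter fun p : Fin n × Fin n =>
        (p.1 : ℕ) + 1 = n ∧ (p.2 : ℕ) = 0 ∧ x p.2 < x p.1).card


/-
Around the cycle the increments `x (i + 1) - x i` sum to zero. A cyclic descent contributes at
most `-1` and any other position at most `k - 1`, so at least `n / k` of the `n` positions are not
descents, whence `cycdes x ≤ ⌊n (k - 1) / k⌋`. The sawtooth word `k-1, k-2, …, 0, k-1, k-2, …`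
attains this bound: its only non-descents are the positions before a multiple of `k` and the
wrap-around.
-/

open Finset

lemma Fin.val_finRotate {n : ℕ} (i : Fin n) :
    (finRotate n i : ℕ) = if (i : ℕ) + 1 = n then 0 else (i : ℕ) + 1 := by
  cases n with
  | zero => exact i.elim0
  | succ m => rw [coe_finRotate]; simp [Fin.ext_iff]

lemma card_filter_graph {α : Type*} [Fintype α] [DecidableEq α] (f : α → α) (P : α → α → Prop)
    [DecidableRel P] : #{p : α × α | p.2 = f p.1 ∧ P p.1 p.2} = #{a | P a (f a)} := by
  refine card_nbij' Prod.fst (fun a => (a, f a)) ?_ ?_ ?_ ?_ <;> intro p <;> aesop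

lemma Nat.mod_lt_add_one_mod_iff {k : ℕ} (hk : 0 < k) (i : ℕ) :
    i % k < (i + 1) % k ↔ ¬ k ∣ i + 1 := by
  have hi := Nat.mod_lt i hk
  rw [Nat.dvd_iff_mod_eq_zero, Nat.add_mod]
  rcases Nat.lt_or_ge 1 k with h1 | h1
  · rw [Nat.mod_eq_of_lt h1]
    by_cases h2 : i % k + 1 = k
    · simp [h2]
    · rw [Nat.mod_eq_of_lt (show i % k + 1 < k by omega)]
      omega
  · obtain rfl : k = 1 := by omega
    simp [Nat.mod_one]

lemma Nat.sub_one_sub_div_eq_mul_sub_one_div {k : ℕ} (hk : 0 < k) (n : ℕ) :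
    n - 1 - (n - 1) / k = n * (k - 1) / k := by
  obtain ⟨j, rfl⟩ : ∃ j, k = j + 1 := ⟨k - 1, by omega⟩
  rcases n with _ | m
  · simp
  obtain ⟨q, r, hr, rfl⟩ : ∃ q r, r < j + 1 ∧ m = (j + 1) * q + r :=
    ⟨_, _, Nat.mod_lt _ hk, (Nat.div_add_mod _ _).symm⟩
  rw [Nat.add_sub_cancel, Nat.add_sub_cancel, Nat.mul_add_div hk, Nat.div_eq_of_lt hr, add_zero]
  have hsub : (j + 1) * q + r - q = j * q + r := by rw [add_mul, one_mul]; omega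
  rw [hsub]
  symm
  apply Nat.div_eq_of_lt_le <;> nlinarith

variable {k n : ℕ}

def cycDescents (x : Fin n → Fin k) : Finset (Fin n) :=
  {i | x (finRotate n i) < x i}

lemma wordCycDes_eq_card_cycDescents (x : Fin n → Fin k) :
    wordCycDes x = #(cycDescents x) := by
  have hdes : wordDes x = #{i ∈ cycDescents x | i.val + 1 < n} := by
    rw [wordDes, cycDescents, filter_filter,
      ← card_filter_graph (finRotate n) fun i j => x j < x i ∧ i.val + 1 < n]
    congr 1
    ext ⟨i, j⟩
    simp only [mem_filter, mem_univ, true_and, Fin.ext_iff, Fin.val_finRotate]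
    split_ifs <;> omega
  have hwrap : #{p : Fin n × Fin n | (p.1 : ℕ) + 1 = n ∧ (p.2 : ℕ) = 0 ∧ x p.2 < x p.1}
      = #{i ∈ cycDescents x | ¬ i.val + 1 < n} := by
    rw [cycDescents, filter_filter,
      ← card_filter_graph (finRotate n) fun i j => x j < x i ∧ ¬ i.val + 1 < n]
    congr 1
    ext ⟨i, j⟩
    simp only [mem_filter, mem_univ, true_and, Fin.ext_iff, Fin.val_finRotate]
    split_ifs <;> omega
  rw [wordCycDes, hdes, hwrap, card_filter_add_card_filter_not]

lemma le_mul_card_compl_cycDescents (x : Fin n → Fin k) : n ≤ k * #(cycDescents x)ᶜ := by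
  set D := cycDescents x
  have htele : ∑ i, ((x (finRotate n i) : ℤ) - x i) = 0 := by
    rw [sum_sub_distrib, Equiv.sum_comp (finRotate n) (fun i => (x i : ℤ)), sub_self]
  have hdes : ∑ i ∈ D, ((x (finRotate n i) : ℤ) - x i) ≤ ∑ i ∈ D, (-1 : ℤ) := by
    refine sum_le_sum fun i hi => ?_
    have : (x (finRotate n i) : ℕ) < x i := by simpa [D, cycDescents] using hi
    omega
  have hasc : ∑ i ∈ Dᶜ, ((x (finRotate n i) : ℤ) - x i) ≤ ∑ i ∈ Dᶜ, ((k : ℤ) - 1) := by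
    refine sum_le_sum fun i _ => ?_
    have := (x (finRotate n i)).isLt
    omega
  have hcard := card_add_card_compl D
  rw [Fintype.card_fin] at hcard
  simp only [sum_const, nsmul_eq_mul, mul_neg, mul_one] at hdes hasc
  have hsum := add_le_add hdes hasc
  rw [sum_add_sum_compl, htele] at hsum
  zify [← hcard]
  linarith

lemma card_cycDescents_le (hk : 0 < k) (x : Fin n → Fin k) :
    #(cycDescents x) ≤ n * (k - 1) / k := by
  have hn := le_mul_card_compl_cycDescents x
  have hcard := card_add_card_compl (cycDescents x)
  rw [Fintype.card_fin] at hcard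
  rw [Nat.le_div_iff_mul_le hk]
  obtain ⟨j, rfl⟩ : ∃ j, k = j + 1 := ⟨k - 1, by omega⟩
  rw [Nat.add_sub_cancel]
  nlinarith

def sawtoothWord (hk : 0 < k) (n : ℕ) : Fin n → Fin k :=
  fun i => ⟨k - 1 - i % k, by omega⟩

lemma cycDescents_sawtoothWord (hk : 0 < k) :
    cycDescents (sawtoothWord hk n) = ({i | i.val + 1 < n ∧ ¬ k ∣ i + 1} : Finset (Fin n)) := by
  ext i
  have hi := Nat.mod_lt i hk
  have hi' := Nat.mod_lt (i + 1) hk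
  have hmod := Nat.mod_lt_add_one_mod_iff hk i
  simp only [cycDescents, sawtoothWord, mem_filter, mem_univ, true_and, Fin.lt_def,
    Fin.val_finRotate]
  split_ifs
  · simp only [Nat.zero_mod]
    omega
  · omega

lemma card_cycDescents_sawtoothWord (hk : 0 < k) :
    #(cycDescents (sawtoothWord hk n)) = n - 1 - (n - 1) / k := by
  have hsplit := card_filter_add_card_filter_not (s := range (n - 1)) (fun e => k ∣ e + 1)
  rw [card_range, Nat.card_multiples] at hsplit
  have hval : #({i | i.val + 1 < n ∧ ¬ k ∣ i + 1} : Finset (Fin n))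
      = #{e ∈ range (n - 1) | ¬ k ∣ e + 1} := by
    refine card_bij (fun i _ => i.val) ?_ (fun _ _ _ _ => Fin.ext) ?_
    · intro i hi
      simp only [mem_filter, mem_univ, true_and, mem_range] at hi ⊢
      omega
    · intro e he
      simp only [mem_filter, mem_range] at he
      exact ⟨⟨e, by omega⟩, by simp only [mem_filter, mem_univ, true_and]; omega, rfl⟩
  rw [cycDescents_sawtoothWord, hval]
  exact Nat.eq_sub_of_add_eq' hsplit

theorem max_cyclic_descents_words_general (k n : ℕ) (hk : 1 ≤ k) :
    IsGreatest {a : ℕ | ∃ x : Fin n → Fin k, wordCycDes x = a} (n * (k - 1) / k) := by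
  refine ⟨⟨sawtoothWord hk n, ?_⟩, ?_⟩
  · rw [wordCycDes_eq_card_cycDescents, card_cycDescents_sawtoothWord,
      Nat.sub_one_sub_div_eq_mul_sub_one_div hk]
  · rintro _ ⟨x, rfl⟩
    rw [wordCycDes_eq_card_cycDescents]
    exact card_cycDescents_le hk x

/-- The maximum of `cycdes x` over all words `x ∈ [k]ⁿ` equals `⌊n(k−1)/k⌋`. -/
theorem max_cyclic_descents_words (k n : ℕ) (hk : 1 ≤ k) (hn : 1 ≤ n) :
    IsGreatest {a : ℕ | ∃ x : Fin n → Fin k, wordCycDes x = a} (n * (k - 1) / k) :=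
  max_cyclic_descents_words_general k n hk
end

section
/- Every m-tensor word w over [k] satisfies cycdes(w) ≤ ∑_{i∈[d]} (∏_{ℓ∈[d], ℓ≠i} m_ℓ)·⌊m_i(k−1)/k⌋. -/
/-- The number of descents and cyclic descents of a cyclic `m`-tensor word `w` over `[k]`. -/
def tensorCycDes {k d : ℕ} {m : Fin d → ℕ} (w : (∀ ℓ, Fin (m ℓ)) → Fin k) : ℕ :=
  tensorDes w +
    (Finset.univ.filter fun p : (∀ ℓ, Fin (m ℓ)) × (∀ ℓ, Fin (m ℓ)) =>
        w p.2 < w p.1 ∧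
          ∃ ℓ, (((p.1 ℓ : ℕ) + 1 = m ℓ ∧ (p.2 ℓ : ℕ) = 0 ∧ ∀ r, r ≠ ℓ → p.2 r = p.1 r) ∧
            ∀ ℓ', ((p.1 ℓ' : ℕ) + 1 = m ℓ' ∧ (p.2 ℓ' : ℕ) = 0 ∧ ∀ r, r ≠ ℓ' → p.2 r = p.1 r) →
              ℓ' = ℓ)).card

/-!
Fix a direction `i`. Each line of `w` in direction `i` is a cyclic word `f` of length `n = m i`
over `[k]`, and the descents and cyclic descents of `w` in direction `i` are exactly the cyclic
descents of these lines. Around a cycle `f (t + 1) - f t` sums to `0`; a descent contributes at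
most `-1` and any other step at most `k - 1`, whence `k · #descents ≤ (k - 1) · n`. There are
`∏_{ℓ ≠ i} m ℓ` lines in direction `i`, and summing over `i` gives the bound.
-/

open Finset

section ShiftDescents

variable {G : Type*} [AddGroup G] [Fintype G] {k : ℕ}

theorem card_filter_add_lt_mul_le (g : G) (f : G → Fin k) :
    #{t | f (t + g) < f t} * k ≤ Fintype.card G * (k - 1) := by
  have pointwise : ∀ t, (if f (t + g) < f t then k else 0) + f (t + g) ≤ (k - 1) + f t := by
    intro t
    have := (f t).isLt
    split_ifs with h
    · have := Fin.lt_def.mp h; omega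
    · have := (f (t + g)).isLt; omega
  have shift : ∑ t, (f (t + g) : ℕ) = ∑ t, (f t : ℕ) :=
    Fintype.sum_equiv (Equiv.addRight g) _ _ fun _ => rfl
  have total := sum_le_sum fun t (_ : t ∈ univ) => pointwise t
  rw [sum_add_distrib, sum_add_distrib, shift, ← sum_filter, sum_const, sum_const,
    card_univ, smul_eq_mul, smul_eq_mul] at total
  linarith

theorem card_filter_add_lt_le (g : G) (f : G → Fin k) :
    #{t | f (t + g) < f t} ≤ Fintype.card G * (k - 1) / k := by
  rcases k.eq_zero_or_pos with rfl | hk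
  · have : IsEmpty G := ⟨fun t => (f t).elim0⟩
    simp
  · exact (Nat.le_div_iff_mul_le hk).2 (card_filter_add_lt_mul_le g f)

theorem card_filter_fst_add_lt_le {H : Type*} [Fintype H] (g : G) (f : G × H → Fin k) :
    #{q : G × H | f (q.1 + g, q.2) < f q} ≤ Fintype.card H * (Fintype.card G * (k - 1) / k) := by
  calc #{q : G × H | f (q.1 + g, q.2) < f q}
      = ∑ y : H, #{t | f (t + g, y) < f (t, y)} := by
        simp only [card_filter, Fintype.sum_prod_type_right]
    _ ≤ ∑ _y : H, Fintype.card G * (k - 1) / k :=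
        sum_le_sum fun y _ => card_filter_add_lt_le g fun t => f (t, y)
    _ = _ := by rw [sum_const, card_univ, smul_eq_mul]

end ShiftDescents

theorem Fin.eq_add_one_of_val_eq_mod {n : ℕ} [NeZero n] {a b : Fin n}
    (h : (b : ℕ) = (a + 1) % n) : b = a + 1 :=
  Fin.ext <| by rw [h, Fin.val_add, Fin.val_one', Nat.add_mod_mod]

theorem Pi.eq_add_single_of_apply_eq {ι : Type*} [DecidableEq ι] {β : ι → Type*}
    [∀ i, AddZeroClass (β i)] {x y : ∀ i, β i} {i : ι} {a : β i} (hi : y i = x i + a)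
    (hr : ∀ r, r ≠ i → y r = x r) : y = x + Pi.single i a := by
  funext r
  by_cases h : r = i
  · subst h; simp [hi]
  · simp [hr r h, h]

section TensorWords

variable {k d : ℕ} {m : Fin d → ℕ} [∀ ℓ, NeZero (m ℓ)]

/-- Adding `Pi.single i 1` wraps around in `Fin (m i)`, so this collects the descents and the
cyclic descents of `w` in direction `i` together. -/
def cyclicDescentsAlong (w : (∀ ℓ, Fin (m ℓ)) → Fin k) (i : Fin d) : Finset (∀ ℓ, Fin (m ℓ)) :=
  {x | w (x + Pi.single i 1) < w x}

theorem card_cyclicDescentsAlong_le (w : (∀ ℓ, Fin (m ℓ)) → Fin k) (i : Fin d) :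
    #(cyclicDescentsAlong w i) ≤ (∏ ℓ ∈ univ.erase i, m ℓ) * (m i * (k - 1) / k) := by
  let e := Equiv.piSplitAt i fun ℓ => Fin (m ℓ)
  have step : ∀ x, e (x + Pi.single i 1) = ((e x).1 + 1, (e x).2) := fun x =>
    Prod.ext (by simp [e]) (funext fun j => by simp [e, j.2])
  have card_eq :
      #(cyclicDescentsAlong w i) = #{q | (w ∘ e.symm) (q.1 + 1, q.2) < (w ∘ e.symm) q} :=
    card_equiv e fun x => by simp [cyclicDescentsAlong, ← step]
  have card_rest : Fintype.card (∀ j : {j // j ≠ i}, Fin (m j)) = ∏ ℓ ∈ univ.erase i, m ℓ := by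
    simp only [Fintype.card_pi, Fintype.card_fin]
    exact (prod_subtype _ (by simp) m).symm
  have := card_filter_fst_add_lt_le (1 : Fin (m i)) (w ∘ e.symm)
  rwa [Fintype.card_fin, card_rest, ← card_eq] at this

theorem tensorCycDes_le_sum_card_cyclicDescentsAlong (w : (∀ ℓ, Fin (m ℓ)) → Fin k) :
    tensorCycDes w ≤ ∑ i, #(cyclicDescentsAlong w i) := by
  have no_overlap : ∀ p : (∀ ℓ, Fin (m ℓ)) × (∀ ℓ, Fin (m ℓ)),
      (∃ ℓ, (p.2 ℓ : ℕ) = p.1 ℓ + 1 ∧ ∀ r, r ≠ ℓ → p.2 r = p.1 r) →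
      ¬ ∃ ℓ, (p.1 ℓ : ℕ) + 1 = m ℓ ∧ (p.2 ℓ : ℕ) = 0 ∧ ∀ r, r ≠ ℓ → p.2 r = p.1 r := by
    rintro p ⟨ℓ, hy, -⟩ ⟨ℓ', -, hy', hr'⟩
    by_cases h : ℓ = ℓ'
    · subst h; omega
    · have := congrArg Fin.val (hr' ℓ h); omega
  let steps := univ.biUnion fun i => (cyclicDescentsAlong w i).image fun x => (x, x + Pi.single i 1)
  have card_steps : #steps ≤ ∑ i, #(cyclicDescentsAlong w i) :=
    card_biUnion_le.trans (sum_le_sum fun i _ => card_image_le)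
  have mem_steps : ∀ p : (∀ ℓ, Fin (m ℓ)) × (∀ ℓ, Fin (m ℓ)), w p.2 < w p.1 →
      ∀ ℓ, (p.2 ℓ : ℕ) = (p.1 ℓ + 1) % m ℓ → (∀ r, r ≠ ℓ → p.2 r = p.1 r) → p ∈ steps := by
    rintro ⟨x, y⟩ hw ℓ hy hr
    dsimp only at hw hy hr
    obtain rfl := Pi.eq_add_single_of_apply_eq (Fin.eq_add_one_of_val_eq_mod hy) hr
    exact mem_biUnion.2 ⟨ℓ, mem_univ _, mem_image_of_mem _ (by simpa [cyclicDescentsAlong] using hw)⟩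
  rw [tensorCycDes, tensorDes, ← card_union_of_disjoint, ← filter_or]
  · refine (card_le_card fun p hp => ?_).trans card_steps
    simp only [mem_filter, mem_univ, true_and] at hp
    rcases hp with ⟨hw, ℓ, hy, hr⟩ | ⟨hw, ℓ, ⟨hx, hy, hr⟩, -⟩
    · exact mem_steps p hw ℓ (by rw [hy, Nat.mod_eq_of_lt (by omega)]) hr
    · exact mem_steps p hw ℓ (by rw [hy, hx, Nat.mod_self]) hr
  · exact disjoint_filter.2 fun p _ hA hB => no_overlap p hA.2 ⟨_, hB.2.choose_spec.1⟩

end TensorWords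

theorem cyclic_descents_upper_bound_general (k d : ℕ)
    (m : Fin d → ℕ) (hm : ∀ ℓ, 1 ≤ m ℓ) (w : (∀ ℓ, Fin (m ℓ)) → Fin k) :
    tensorCycDes w ≤
      ∑ i, (∏ ℓ ∈ Finset.univ.erase i, m ℓ) * (m i * (k - 1) / k) := by
  have : ∀ ℓ, NeZero (m ℓ) := fun ℓ => ⟨Nat.one_le_iff_ne_zero.mp (hm ℓ)⟩
  exact (tensorCycDes_le_sum_card_cyclicDescentsAlong w).trans
    (sum_le_sum fun i _ => card_cyclicDescentsAlong_le w i)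

/-- Every `m`-tensor word `w` over `[k]` satisfies
`cycdes w ≤ ∑ i, (∏_{ℓ ≠ i} m ℓ) · ⌊m i (k−1)/k⌋`. -/
theorem cyclic_descents_upper_bound (k d : ℕ) (hk : 1 ≤ k) (hd : 1 ≤ d)
    (m : Fin d → ℕ) (hm : ∀ ℓ, 1 ≤ m ℓ) (w : (∀ ℓ, Fin (m ℓ)) → Fin k) :
    tensorCycDes w ≤
      ∑ i, (∏ ℓ ∈ Finset.univ.erase i, m ℓ) * (m i * (k - 1) / k) :=
  cyclic_descents_upper_bound_general k d m hm w
end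

section
/- Fix an m-tensor word w over [k] and write c(w,w') = #{i ∈ [m_1]×⋯×[m_d] : w(i) > w'(i)} for w' ∈ T(m,k). For integers n ≥ 1 and ℓ ≥ 0, let D(n,ℓ,w) denote the number of (m_1,…,m_d,n)-tensor words v over [k] with v(i,1) = w(i) for all i ∈ [m_1]×⋯×[m_d] and des(v) = ℓ. Then D(1,ℓ,w) = 1 if ℓ = des(w) and D(1,ℓ,w) = 0 otherwise, and for every n ≥ 2 and ℓ ≥ 0, D(n,ℓ,w) = ∑_{w'∈T(m,k), des(w)+c(w,w') ≤ ℓ} D(n−1, ℓ − des(w) − c(w,w'), w'). -/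
/-- `c w w'` is the number of indices `i` with `w i > w' i`. -/
def cGT {k d : ℕ} {m : Fin d → ℕ} (w w' : (∀ ℓ, Fin (m ℓ)) → Fin k) : ℕ :=
  (Finset.univ.filter fun i : ∀ ℓ, Fin (m ℓ) => w' i < w i).card

/-- `Dnum k d m n ℓ w` is the number of `(m₁,…,m_d,n)`-tensor words `v` over `[k]` whose
first layer (the layer with last coordinate `1`, i.e. `0` in 0-indexed terms) is `w` and
with `des v = ℓ`. -/
def Dnum (k d : ℕ) (m : Fin d → ℕ) (n ℓ : ℕ) (w : (∀ r, Fin (m r)) → Fin k) : ℕ :=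
  (Finset.univ.filter fun v : ((∀ r, Fin (m r)) × Fin n) → Fin k =>
      (∀ i, ∀ s : Fin n, (s : ℕ) = 0 → v (i, s) = w i) ∧ extTensorDes v = ℓ).card

section Aux
variable {k d N : ℕ} {m : Fin d → ℕ}

/-- drop the first layer -/
def shiftWord (v : ((∀ r, Fin (m r)) × Fin (N + 1)) → Fin k) :
    ((∀ r, Fin (m r)) × Fin N) → Fin k := fun p => v (p.1, p.2.succ)

lemma extTensorDes_one {w : (∀ r, Fin (m r)) → Fin k} :
    extTensorDes (fun p : (∀ r, Fin (m r)) × Fin 1 => w p.1) = tensorDes w := by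
  unfold extTensorDes tensorDes
  refine Finset.card_bij' (fun p _ => (p.1.1, p.2.1))
    (fun q _ => ((q.1, (0 : Fin 1)), (q.2, (0 : Fin 1)))) ?_ ?_ ?_ ?_
  · rintro ⟨⟨i, s⟩, ⟨j, t⟩⟩ hp
    simp only [Finset.mem_filter, Finset.mem_univ, true_and] at hp ⊢
    obtain ⟨hlt, h⟩ := hp
    refine ⟨hlt, ?_⟩
    rcases h with ⟨-, h⟩ | ⟨-, h⟩
    · exact h
    · omega
  · rintro ⟨i, j⟩ hq
    simp only [Finset.mem_filter, Finset.mem_univ, true_and] at hq ⊢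
    exact ⟨hq.1, Or.inl hq.2⟩
  · rintro ⟨⟨i, s⟩, ⟨j, t⟩⟩ _
    exact Prod.ext (Prod.ext rfl (Subsingleton.elim _ _)) (Prod.ext rfl (Subsingleton.elim _ _))
  · rintro ⟨i, j⟩ _
    rfl

lemma extTensorDes_split (hN : 1 ≤ N) (v : ((∀ r, Fin (m r)) × Fin (N + 1)) → Fin k)
    (t1 : Fin (N + 1)) (ht1 : (t1 : ℕ) = 1) :
    extTensorDes v =
      tensorDes (fun i => v (i, 0)) +
        cGT (fun i => v (i, 0)) (fun i => v (i, t1)) +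
          extTensorDes (shiftWord v) := by
  classical
  set S := (Finset.univ.filter fun p :
      ((∀ ℓ, Fin (m ℓ)) × Fin (N + 1)) × ((∀ ℓ, Fin (m ℓ)) × Fin (N + 1)) =>
      v p.2 < v p.1 ∧
        ((p.2.2 = p.1.2 ∧
            ∃ ℓ, ((p.2.1 ℓ : ℕ) = (p.1.1 ℓ : ℕ) + 1 ∧ ∀ r, r ≠ ℓ → p.2.1 r = p.1.1 r)) ∨
          (p.2.1 = p.1.1 ∧ (p.2.2 : ℕ) = (p.1.2 : ℕ) + 1))) with hS
  have hv : extTensorDes v = S.card := rfl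
  have hsplit1 := Finset.card_filter_add_card_filter_not
    (s := S) (p := fun p => (p.1.2 : ℕ) = 0)
  have hsplit2 := Finset.card_filter_add_card_filter_not
    (s := S.filter (fun p => (p.1.2 : ℕ) = 0)) (p := fun p => p.2.2 = p.1.2)
  have hA : ((S.filter (fun p => (p.1.2 : ℕ) = 0)).filter (fun p => p.2.2 = p.1.2)).card
      = tensorDes (fun i => v (i, 0)) := by
    unfold tensorDes
    refine Finset.card_bij' (fun p _ => (p.1.1, p.2.1))
      (fun q _ => ((q.1, (0 : Fin (N + 1))), (q.2, (0 : Fin (N + 1))))) ?_ ?_ ?_ ?_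
    · rintro ⟨⟨i, s⟩, ⟨j, t⟩⟩ hp
      simp only [hS, Finset.mem_filter, Finset.mem_univ, true_and] at hp ⊢
      obtain ⟨⟨⟨hlt, h⟩, hs0⟩, hts⟩ := hp
      have hs : s = (0 : Fin (N + 1)) := Fin.ext (by simpa using hs0)
      have ht : t = (0 : Fin (N + 1)) := by rw [hts, hs]
      subst hs; subst ht
      refine ⟨hlt, ?_⟩
      rcases h with ⟨-, h⟩ | ⟨-, h⟩
      · exact h
      · simp at h
    · rintro ⟨i, j⟩ hq
      simp only [hS, Finset.mem_filter, Finset.mem_univ, true_and] at hq ⊢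
      exact ⟨⟨⟨hq.1, Or.inl hq.2⟩, rfl⟩, trivial⟩
    · rintro ⟨⟨i, s⟩, ⟨j, t⟩⟩ hp
      simp only [hS, Finset.mem_filter, Finset.mem_univ, true_and] at hp
      obtain ⟨⟨-, hs0⟩, hts⟩ := hp
      have hs : s = (0 : Fin (N + 1)) := Fin.ext (by simpa using hs0)
      have ht : t = (0 : Fin (N + 1)) := by rw [hts, hs]
      simp [hs, ht]
    · rintro ⟨i, j⟩ _; rfl
  have hB : ((S.filter (fun p => (p.1.2 : ℕ) = 0)).filter (fun p => ¬ p.2.2 = p.1.2)).card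
      = cGT (fun i => v (i, 0)) (fun i => v (i, t1)) := by
    unfold cGT
    refine Finset.card_bij' (fun p _ => p.1.1)
      (fun i _ => ((i, (0 : Fin (N + 1))), (i, t1))) ?_ ?_ ?_ ?_
    · rintro ⟨⟨i, s⟩, ⟨j, t⟩⟩ hp
      simp only [hS, Finset.mem_filter, Finset.mem_univ, true_and] at hp ⊢
      obtain ⟨⟨⟨hlt, h⟩, hs0⟩, hts⟩ := hp
      rcases h with ⟨hteq, -⟩ | ⟨hji, ht1⟩
      · exact absurd hteq hts
      · have hs : s = (0 : Fin (N + 1)) := Fin.ext (by simpa using hs0)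
        have ht : t = t1 := Fin.ext (by rw [ht1]; omega)
        subst hji
        rw [hs, ht] at hlt
        exact hlt
    · rintro i hi
      simp only [hS, Finset.mem_filter, Finset.mem_univ, true_and] at hi ⊢
      refine ⟨⟨⟨hi, Or.inr (by simp [ht1])⟩, rfl⟩, ?_⟩
      intro hcon
      have := congrArg (fun x : Fin (N + 1) => (x : ℕ)) hcon
      simp [ht1] at this
    · rintro ⟨⟨i, s⟩, ⟨j, t⟩⟩ hp
      simp only [hS, Finset.mem_filter, Finset.mem_univ, true_and] at hp
      obtain ⟨⟨⟨hlt, h⟩, hs0⟩, hts⟩ := hp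
      rcases h with ⟨hteq, -⟩ | ⟨hji, ht1⟩
      · exact absurd hteq hts
      · have hs : s = (0 : Fin (N + 1)) := Fin.ext (by simpa using hs0)
        have ht : t = t1 := Fin.ext (by rw [ht1]; omega)
        simp [hs, ht, hji]
    · rintro i _; rfl
  have hC : (S.filter (fun p => ¬ (p.1.2 : ℕ) = 0)).card = extTensorDes (shiftWord v) := by
    unfold extTensorDes
    have fdef : ∀ x : Fin (N + 1), ((x : ℕ) - 1) < N := by
      intro x; have := x.isLt; omega
    have hsucc : ∀ x : Fin (N + 1), (x : ℕ) ≠ 0 →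
        (⟨(x : ℕ) - 1, fdef x⟩ : Fin N).succ = x := by
      intro x hx; apply Fin.ext; simp [Fin.val_succ]; omega
    refine Finset.card_bij' (fun p _ =>
        ((p.1.1, (⟨(p.1.2 : ℕ) - 1, fdef _⟩ : Fin N)),
         (p.2.1, (⟨(p.2.2 : ℕ) - 1, fdef _⟩ : Fin N))))
      (fun q _ => ((q.1.1, q.1.2.succ), (q.2.1, q.2.2.succ))) ?_ ?_ ?_ ?_
    · rintro ⟨⟨i, s⟩, ⟨j, t⟩⟩ hp
      simp only [hS, Finset.mem_filter, Finset.mem_univ, true_and] at hp ⊢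
      obtain ⟨⟨hlt, h⟩, hs0⟩ := hp
      rcases h with ⟨hteq, hhor⟩ | ⟨hji, ht1⟩
      · have ht0 : (t : ℕ) ≠ 0 := by rw [hteq]; exact hs0
        constructor
        · show v (j, _) < v (i, _)
          rw [hsucc t ht0, hsucc s hs0]
          exact hlt
        · left
          refine ⟨?_, hhor⟩
          apply Fin.ext
          have := congrArg (fun x : Fin (N + 1) => (x : ℕ)) hteq
          simp at this ⊢
          omega
      · have ht0 : (t : ℕ) ≠ 0 := by omega
        constructor
        · show v (j, _) < v (i, _)
          rw [hsucc t ht0, hsucc s hs0]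
          exact hlt
        · right
          refine ⟨hji, ?_⟩
          simp
          omega
    · rintro ⟨⟨i, s⟩, ⟨j, t⟩⟩ hq
      simp only [hS, Finset.mem_filter, Finset.mem_univ, true_and] at hq ⊢
      obtain ⟨hlt, h⟩ := hq
      refine ⟨⟨hlt, ?_⟩, by simp [Fin.val_succ]⟩
      rcases h with ⟨hteq, hhor⟩ | ⟨hji, ht1⟩
      · exact Or.inl ⟨by rw [hteq], hhor⟩
      · refine Or.inr ⟨hji, ?_⟩
        simp only [Fin.val_succ]
        omega
    · rintro ⟨⟨i, s⟩, ⟨j, t⟩⟩ hp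
      simp only [hS, Finset.mem_filter, Finset.mem_univ, true_and] at hp
      obtain ⟨⟨hlt, h⟩, hs0⟩ := hp
      have ht0 : (t : ℕ) ≠ 0 := by
        rcases h with ⟨hteq, -⟩ | ⟨-, ht1⟩
        · rw [hteq]; exact hs0
        · omega
      exact Prod.ext (Prod.ext rfl (hsucc s hs0)) (Prod.ext rfl (hsucc t ht0))
    · rintro ⟨⟨i, s⟩, ⟨j, t⟩⟩ _
      exact Prod.ext (Prod.ext rfl (Fin.ext (by simp [Fin.val_succ])))
        (Prod.ext rfl (Fin.ext (by simp [Fin.val_succ])))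
  omega


/-- prepend a layer `w` -/
def extendWord (w : (∀ r, Fin (m r)) → Fin k) (v' : ((∀ r, Fin (m r)) × Fin N) → Fin k) :
    ((∀ r, Fin (m r)) × Fin (N + 1)) → Fin k := fun p =>
  if h0 : (p.2 : ℕ) = 0 then w p.1
  else v' (p.1, ⟨(p.2 : ℕ) - 1, by have := p.2.isLt; omega⟩)

lemma shiftWord_extendWord (w : (∀ r, Fin (m r)) → Fin k)
    (v' : ((∀ r, Fin (m r)) × Fin N) → Fin k) :
    shiftWord (extendWord w v') = v' := by
  funext p
  have h0 : ((p.2.succ : Fin (N + 1)) : ℕ) ≠ 0 := by simp [Fin.val_succ]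
  simp only [shiftWord, extendWord, dif_neg h0]
  congr 2

lemma extendWord_shiftWord (w : (∀ r, Fin (m r)) → Fin k)
    (v : ((∀ r, Fin (m r)) × Fin (N + 1)) → Fin k)
    (h : ∀ i, v (i, 0) = w i) :
    extendWord w (shiftWord v) = v := by
  funext p
  by_cases h0 : (p.2 : ℕ) = 0
  · have hp : p = (p.1, 0) := Prod.ext rfl (Fin.ext (by simpa using h0))
    rw [extendWord, dif_pos h0, hp, h]
  · rw [extendWord, dif_neg h0]
    show v (p.1, _) = v p
    congr 1
    exact Prod.ext rfl (Fin.ext (by simp [Fin.val_succ]; omega))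

end Aux

/-- `D(1,ℓ,w) = 1` if `ℓ = des w` and `0` otherwise, and for `n ≥ 2`,
`D(n,ℓ,w) = ∑_{w', des w + c(w,w') ≤ ℓ} D(n−1, ℓ − des w − c(w,w'), w')`. -/
theorem Dnum_recursion (k d : ℕ) (hk : 1 ≤ k) (hd : 1 ≤ d)
    (m : Fin d → ℕ) (hm : ∀ ℓ, 1 ≤ m ℓ) (w : (∀ r, Fin (m r)) → Fin k) :
    (∀ ℓ : ℕ, Dnum k d m 1 ℓ w = if ℓ = tensorDes w then 1 else 0) ∧
      (∀ n : ℕ, 2 ≤ n → ∀ ℓ : ℕ,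
        Dnum k d m n ℓ w =
          ∑ w' : (∀ r, Fin (m r)) → Fin k,
            if tensorDes w + cGT w w' ≤ ℓ then
              Dnum k d m (n - 1) (ℓ - (tensorDes w + cGT w w')) w'
            else 0) := by
  classical
  constructor
  · intro ℓ
    rw [Dnum]
    by_cases h : ℓ = tensorDes w
    · rw [if_pos h, Finset.card_eq_one]
      refine ⟨fun p => w p.1, ?_⟩
      ext v
      simp only [Finset.mem_filter, Finset.mem_univ, true_and, Finset.mem_singleton]
      constructor
      · rintro ⟨h1, -⟩
        funext p
        exact h1 p.1 p.2 (by have := p.2.isLt; omega)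
      · rintro rfl
        exact ⟨fun i s _ => rfl, by rw [extTensorDes_one, h]⟩
    · rw [if_neg h, Finset.card_eq_zero, Finset.filter_eq_empty_iff]
      rintro v - ⟨h1, h2⟩
      have hv : v = fun p => w p.1 := by
        funext p
        exact h1 p.1 p.2 (by have := p.2.isLt; omega)
      rw [hv, extTensorDes_one] at h2
      exact h (h2.symm)
  · intro n hn ℓ
    obtain ⟨N, rfl⟩ : ∃ N, n = N + 1 := ⟨n - 1, by omega⟩
    have hN : 1 ≤ N := by omega
    have h1N : 1 < N + 1 := by omega
    simp only [Nat.add_sub_cancel]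
    rw [Dnum]
    rw [Finset.card_eq_sum_card_fiberwise
      (f := fun v : ((∀ r, Fin (m r)) × Fin (N + 1)) → Fin k =>
        fun i => v (i, (⟨1, h1N⟩ : Fin (N + 1))))
      (t := Finset.univ) (fun _ _ => Finset.mem_univ _)]
    apply Finset.sum_congr rfl
    intro w' _
    by_cases hle : tensorDes w + cGT w w' ≤ ℓ
    · rw [if_pos hle, Dnum]
      refine Finset.card_bij' (fun v _ => shiftWord v) (fun v' _ => extendWord w v') ?_ ?_ ?_ ?_
      · rintro v hv
        simp only [Finset.mem_filter, Finset.mem_univ, true_and] at hv ⊢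
        obtain ⟨⟨h1, h2⟩, hfib⟩ := hv
        have hl0 : (fun i => v (i, 0)) = w := funext fun i => h1 i 0 rfl
        have key : extTensorDes v = tensorDes w + cGT w w' + extTensorDes (shiftWord v) := by
          rw [extTensorDes_split hN v ⟨1, h1N⟩ rfl, hl0, hfib]
        constructor
        · intro i s hs
          have hss : (s.succ : Fin (N + 1)) = ⟨1, h1N⟩ := Fin.ext (by simp [Fin.val_succ, hs])
          show v (i, s.succ) = w' i
          rw [hss]
          exact congrFun hfib i
        · omega
      · rintro v' hv'
        simp only [Finset.mem_filter, Finset.mem_univ, true_and] at hv' ⊢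
        obtain ⟨h1, h2⟩ := hv'
        have hl0 : (fun i => extendWord w v' (i, 0)) = w := by
          funext i
          rw [extendWord]
          exact dif_pos rfl
        have hl1 : (fun i => extendWord w v' (i, (⟨1, h1N⟩ : Fin (N + 1)))) = w' := by
          funext i
          rw [extendWord, dif_neg (by simp)]
          exact h1 i _ rfl
        have key : extTensorDes (extendWord w v') =
            tensorDes w + cGT w w' + extTensorDes (shiftWord (extendWord w v')) := by
          rw [extTensorDes_split hN _ ⟨1, h1N⟩ rfl, hl0, hl1]
        rw [shiftWord_extendWord] at key
        refine ⟨⟨fun i s hs => ?_, by omega⟩, hl1⟩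
        have hs0 : s = (0 : Fin (N + 1)) := Fin.ext (by simpa using hs)
        rw [hs0]
        exact congrFun hl0 i
      · rintro v hv
        simp only [Finset.mem_filter, Finset.mem_univ, true_and] at hv
        exact extendWord_shiftWord w v (fun i => hv.1.1 i 0 rfl)
      · rintro v' _
        exact shiftWord_extendWord w v'
    · rw [if_neg hle, Finset.card_eq_zero, Finset.filter_eq_empty_iff]
      rintro v hv hfib
      simp only [Finset.mem_filter, Finset.mem_univ, true_and] at hv
      obtain ⟨h1, h2⟩ := hv
      have hl0 : (fun i => v (i, 0)) = w := funext fun i => h1 i 0 rfl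
      have key := extTensorDes_split hN v ⟨1, h1N⟩ rfl
      rw [hl0, hfib] at key
      omega
end
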